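/- Let A be a connected locally finite graded k-algebra that is graded right coherent, and suppose that every finitely presented graded right A-module is both effective for series and effective for generators. Then every finitely presented graded right A-module is effectively coherent; in particular, A is effectively coherent. -/

import Mathlib

open MulOpposite

namespace NCG

variable (k : Type) [Field k] (R : Type) [Ring R] [Algebra k R]

/-- `𝒜` is a connected grading on the `k`-algebra `R`: the graded pieces multiply
correctly, `R` is their internal direct sum, and the degree-zero piece is `k·1`. -/
def IsConnAlg (𝒜 : ℕ → Submodule k R) : Prop :=
  (∀ (i j : ℕ), ∀ x ∈ 𝒜 i, ∀ y ∈ 𝒜 j, x * y ∈ 𝒜 (i + j)) ∧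
  DirectSum.IsInternal 𝒜 ∧
  𝒜 0 = Submodule.span k {(1 : R)}

/-- `R` is locally finite: every graded piece is finite-dimensional over `k`. -/
def LocFin (𝒜 : ℕ → Submodule k R) : Prop := ∀ i, FiniteDimensional k (𝒜 i)

/-- `R` is a finitely generated `k`-algebra. -/
def FinGenAlg : Prop := ∃ s : Finset R, Algebra.adjoin k (s : Set R) = ⊤

/-- extension of the grading to `ℤ` (zero in negative degrees). -/
noncomputable def grZ (𝒜 : ℕ → Submodule k R) : ℤ → Submodule k R :=
  fun j => if 0 ≤ j then 𝒜 j.toNat else ⊥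

/-- the augmentation ideal `R_{≥1}`, as a right ideal of `R`. -/
def aug (𝒜 : ℕ → Submodule k R) : Submodule Rᵐᵒᵖ R :=
  Submodule.span Rᵐᵒᵖ (⋃ i : ℕ, ⋃ _ : 1 ≤ i, ((𝒜 i : Set R)))

variable (M : Type) [AddCommGroup M] [Module Rᵐᵒᵖ M] [Module k M]

/-- `ℳ` makes `M` a graded right module over the graded algebra `(R, 𝒜)`. -/
def IsGradedMod (𝒜 : ℕ → Submodule k R) (ℳ : ℤ → Submodule k M) : Prop :=
  (∀ (i : ℕ) (j : ℤ), ∀ r ∈ 𝒜 i, ∀ x ∈ ℳ j, (op r) • x ∈ ℳ (j + i)) ∧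
  DirectSum.IsInternal ℳ

/-- the submodule `N` of `M` is generated in degrees at most `dd`. -/
def GenLE (ℳ : ℤ → Submodule k M) (N : Submodule Rᵐᵒᵖ M) (dd : ℤ) : Prop :=
  N ≤ Submodule.span Rᵐᵒᵖ {x : M | x ∈ N ∧ ∃ j ≤ dd, x ∈ ℳ j}

/-- the submodule `N` is a graded (homogeneous) submodule of `M`. -/
def IsGradedSub (ℳ : ℤ → Submodule k M) (N : Submodule Rᵐᵒᵖ M) : Prop :=
  N ≤ Submodule.span Rᵐᵒᵖ {x : M | x ∈ N ∧ ∃ j : ℤ, x ∈ ℳ j}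

/-- the Hilbert series of a submodule `N` of `M`, as its coefficient function. -/
noncomputable def hilb (ℳ : ℤ → Submodule k M) [IsScalarTower k Rᵐᵒᵖ M]
    (N : Submodule Rᵐᵒᵖ M) : ℤ → ℕ :=
  fun j => Module.finrank k ↥(ℳ j ⊓ N.restrictScalars k)

/-- the Hilbert series of a right ideal of `R`, as its coefficient function. -/
noncomputable def hilbI (𝒜 : ℕ → Submodule k R) (I : Submodule Rᵐᵒᵖ R) : ℕ → ℕ :=
  fun j => Module.finrank k ↥(𝒜 j ⊓ I.restrictScalars k)

/-- the Hilbert series of the algebra `R`, as its coefficient function. -/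
noncomputable def hilbA (𝒜 : ℕ → Submodule k R) : ℕ → ℕ :=
  fun j => Module.finrank k ↥(𝒜 j)

/-- `v` is a solution of the homogeneous linear equation `a₁x₁ + ⋯ + aₙxₙ = 0`. -/
def IsSol {n : ℕ} (a : Fin n → M) (v : Fin n → R) : Prop :=
  ∑ i, op (v i) • a i = 0

/-- `w` is a homogeneous element of degree `j` of the free module `⊕ᵢ R(-dg i)`. -/
def FreeHomog (𝒜 : ℕ → Submodule k R) {n : ℕ} (dg : Fin n → ℤ)
    (w : Fin n → R) (j : ℤ) : Prop :=
  ∀ i, w i ∈ grZ k R 𝒜 (j - dg i)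

/-- The module of solutions of the equation with homogeneous coefficients `a` (of
degrees `dg`) is generated in degrees at most `D`: every solution is an `R`-linear
combination of homogeneous solutions of degree at most `D`. -/
def SolGenLE (𝒜 : ℕ → Submodule k R) {n : ℕ} (a : Fin n → M) (dg : Fin n → ℤ)
    (D : ℤ) : Prop :=
  ∀ v : Fin n → R, IsSol R M a v →
    v ∈ Submodule.span Rᵐᵒᵖ
      {w : Fin n → R | IsSol R M a w ∧ ∃ j ≤ D, FreeHomog k R 𝒜 dg w j}

/-- The module of solutions of the equation with coefficients `a` is generated by the
(finitely many) solutions `h`. -/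
def SolSpanBy {n : ℕ} (a : Fin n → M) {m : ℕ} (h : Fin m → (Fin n → R)) : Prop :=
  (∀ j, IsSol R M a (h j)) ∧
  ∀ v : Fin n → R, IsSol R M a v → v ∈ Submodule.span Rᵐᵒᵖ (Set.range h)

/-- `D` witnesses the effective coherence of the graded module `M`. -/
def WitnessEC (𝒜 : ℕ → Submodule k R) (ℳ : ℤ → Submodule k M) (D : ℕ → ℕ) : Prop :=
  (∀ d, d ≤ D d) ∧
  ∀ (d n : ℕ) (a : Fin n → M) (dg : Fin n → ℤ),
    (∀ i, a i ∈ ℳ (dg i)) → (∀ i, dg i ≤ (d : ℤ)) →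
    SolGenLE k R M 𝒜 a dg ((D d : ℕ) : ℤ)

/-- the graded module `M` is effectively coherent. -/
def EffCoh (𝒜 : ℕ → Submodule k R) (ℳ : ℤ → Submodule k M) : Prop :=
  ∃ D : ℕ → ℕ, WitnessEC k R M 𝒜 ℳ D

/-- the algebra `R` is effectively coherent (as a right module over itself). -/
noncomputable def EffCohAlg (𝒜 : ℕ → Submodule k R) : Prop :=
  EffCoh k R R 𝒜 (grZ k R 𝒜)

/-- `M` is a finitely presented graded right `R`-module. -/
def ModFinPres (𝒜 : ℕ → Submodule k R) (ℳ : ℤ → Submodule k M) : Prop :=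
  ∃ (t : ℕ) (b : Fin t → M) (db : Fin t → ℤ),
    (∀ i, b i ∈ ℳ (db i)) ∧ Submodule.span Rᵐᵒᵖ (Set.range b) = ⊤ ∧
    ∃ (m : ℕ) (h : Fin m → (Fin t → R)) (e : Fin m → ℤ),
      (∀ j, FreeHomog k R 𝒜 db (h j) (e j)) ∧ SolSpanBy R M b h

/-- `R` is a finitely presented algebra: there is an exact sequence
`F₂ → F₁ → R → k_R → 0` of graded right modules with `F₁, F₂` finite graded free. -/
def AlgFinPres (𝒜 : ℕ → Submodule k R) : Prop :=
  ∃ (n : ℕ) (g : Fin n → R) (dg : Fin n → ℕ),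
    (∀ i, g i ∈ 𝒜 (dg i)) ∧
    Submodule.span Rᵐᵒᵖ (Set.range g) = aug k R 𝒜 ∧
    ∃ (m : ℕ) (h : Fin m → (Fin n → R)) (e : Fin m → ℤ),
      (∀ j, FreeHomog k R 𝒜 (fun i => (dg i : ℤ)) (h j) (e j)) ∧
      SolSpanBy R R g h

/-- `R` admits an exact sequence `F₃ → F₂ → F₁ → R → k_R → 0` of graded right modules
with all `Fᵢ` finite graded free (finitely presented with `dim Tor₃ < ∞`). -/
def AlgFinPres3 (𝒜 : ℕ → Submodule k R) : Prop :=
  ∃ (n : ℕ) (g : Fin n → R) (dg : Fin n → ℕ),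
    (∀ i, g i ∈ 𝒜 (dg i)) ∧
    Submodule.span Rᵐᵒᵖ (Set.range g) = aug k R 𝒜 ∧
    ∃ (m : ℕ) (h : Fin m → (Fin n → R)) (e : Fin m → ℤ),
      (∀ j, FreeHomog k R 𝒜 (fun i => (dg i : ℤ)) (h j) (e j)) ∧
      SolSpanBy R R g h ∧
      ∃ (p : ℕ) (u : Fin p → (Fin m → R)) (f : Fin p → ℤ),
        (∀ l, FreeHomog k R 𝒜 e (u l) (f l)) ∧
        SolSpanBy R (Fin n → R) h u

/-- membership in the class `D(n,a,b,c)`: there is an exact sequence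
`F₃ → F₂ → F₁ → R → k_R → 0` with `F₁` of rank at most `n` and basis in degrees `≤ a`,
`F₂` with basis in degrees `≤ b` and `F₃` with basis in degrees `≤ c`. -/
def InDClass (𝒜 : ℕ → Submodule k R) (n a b c : ℕ) : Prop :=
  ∃ (n' : ℕ), n' ≤ n ∧ ∃ (g : Fin n' → R) (dg : Fin n' → ℕ),
    (∀ i, dg i ≤ a) ∧ (∀ i, g i ∈ 𝒜 (dg i)) ∧
    Submodule.span Rᵐᵒᵖ (Set.range g) = aug k R 𝒜 ∧
    ∃ (m : ℕ) (h : Fin m → (Fin n' → R)) (e : Fin m → ℤ),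
      (∀ j, e j ≤ (b : ℤ)) ∧
      (∀ j, FreeHomog k R 𝒜 (fun i => (dg i : ℤ)) (h j) (e j)) ∧
      SolSpanBy R R g h ∧
      SolGenLE k R (Fin n' → R) 𝒜 h e (c : ℤ)

/-- the right ideal `I` has a finite homogeneous generating family in degrees `≤ d`. -/
def FinGenLE (𝒜 : ℕ → Submodule k R) (I : Submodule Rᵐᵒᵖ R) (d : ℕ) : Prop :=
  ∃ (n : ℕ) (x : Fin n → R) (dx : Fin n → ℕ),
    (∀ i, dx i ≤ d) ∧ (∀ i, x i ∈ 𝒜 (dx i)) ∧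
    Submodule.span Rᵐᵒᵖ (Set.range x) = I

/-- lexicographic strict order on `ℕ`-indexed coefficient functions: `f <_lex g`. -/
def LexLtN (f g : ℕ → ℕ) : Prop := ∃ q, (∀ i < q, f i = g i) ∧ f q < g q

/-- lexicographic strict order on `ℤ`-indexed coefficient functions: `f <_lex g`. -/
def LexLtZ (f g : ℤ → ℕ) : Prop := ∃ q, (∀ i < q, f i = g i) ∧ f q < g q

/-- the right annihilator ideal of an element `a : R`. -/
def rAnn (a : R) : Submodule Rᵐᵒᵖ R where
  carrier := {r : R | a * r = 0}
  add_mem' := by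
    intro x y hx hy
    simp only [Set.mem_setOf_eq] at *
    rw [mul_add, hx, hy, add_zero]
  zero_mem' := by simp
  smul_mem' := by
    intro c x hx
    simp only [Set.mem_setOf_eq] at *
    rw [← op_unop c, op_smul_eq_mul, ← mul_assoc, hx, zero_mul]

/-- the colon right ideal `(x : J) = { a ∈ R | x·a ∈ J }`. -/
def colon (x : R) (J : Submodule Rᵐᵒᵖ R) : Submodule Rᵐᵒᵖ R where
  carrier := {a : R | x * a ∈ J}
  add_mem' := by
    intro p q hp hq
    simp only [Set.mem_setOf_eq] at *
    rw [mul_add]; exact J.add_mem hp hq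
  zero_mem' := by simp
  smul_mem' := by
    intro c p hp
    simp only [Set.mem_setOf_eq] at *
    rw [← op_unop c, op_smul_eq_mul, ← mul_assoc]
    exact J.smul_mem (op (unop c)) hp

/-- `F` is a coherent family of right ideals of `R`. -/
def IsCohFam (𝒜 : ℕ → Submodule k R) (F : Set (Submodule Rᵐᵒᵖ R)) : Prop :=
  (∀ I ∈ F, I.FG ∧ IsGradedSub k R R (grZ k R 𝒜) I) ∧
  (⊥ : Submodule Rᵐᵒᵖ R) ∈ F ∧ aug k R 𝒜 ∈ F ∧
  ∀ I ∈ F, I ≠ ⊥ → ∃ J ∈ F, J ≠ I ∧ ∃ x : R, (∃ dx : ℕ, x ∈ 𝒜 dx) ∧ x ∈ I ∧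
    I = J ⊔ Submodule.span Rᵐᵒᵖ {x} ∧
    (∀ dI : ℤ, GenLE k R R (grZ k R 𝒜) I dI → GenLE k R R (grZ k R 𝒜) J dI) ∧
    colon R x J ∈ F

/-- the family `F` of ideals has degree at most `d`. -/
def CohFamDegLE (𝒜 : ℕ → Submodule k R) (F : Set (Submodule Rᵐᵒᵖ R)) (d : ℕ) : Prop :=
  ∀ I ∈ F, GenLE k R R (grZ k R 𝒜) I (d : ℤ)

/-- the right ideal `I` is finitely presented as a graded module. -/
def IdealFinPres (𝒜 : ℕ → Submodule k R) (I : Submodule Rᵐᵒᵖ R) : Prop :=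
  ∃ (n : ℕ) (x : Fin n → R) (dx : Fin n → ℕ),
    (∀ i, x i ∈ 𝒜 (dx i)) ∧ Submodule.span Rᵐᵒᵖ (Set.range x) = I ∧
    ∃ (m : ℕ) (h : Fin m → (Fin n → R)) (e : Fin m → ℤ),
      (∀ j, FreeHomog k R 𝒜 (fun i => (dx i : ℤ)) (h j) (e j)) ∧
      SolSpanBy R R x h

/-- `R` is graded right coherent: every finitely generated homogeneous right ideal
is finitely presented as a graded module. -/
def GradedCoherent (𝒜 : ℕ → Submodule k R) : Prop :=
  ∀ I : Submodule Rᵐᵒᵖ R, I.FG → IsGradedSub k R R (grZ k R 𝒜) I →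
    IdealFinPres k R 𝒜 I

/-- a free resolution of the right ideal `I` by finite graded free modules whose
bases at level `i` sit in degrees at most `B i`. -/
def FreeResBdd (𝒜 : ℕ → Submodule k R) (I : Submodule Rᵐᵒᵖ R) (B : ℕ → ℤ) : Prop :=
  ∃ (r : ℕ → ℕ) (dgs : (i : ℕ) → Fin (r i) → ℤ)
    (g0 : Fin (r 0) → R)
    (g : (i : ℕ) → Fin (r (i + 1)) → (Fin (r i) → R)),
    (∀ l, dgs 0 l ≤ B 0) ∧
    (∀ l, g0 l ∈ grZ k R 𝒜 (dgs 0 l)) ∧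
    Submodule.span Rᵐᵒᵖ (Set.range g0) = I ∧
    (∀ (i : ℕ) (l : Fin (r (i + 1))), dgs (i + 1) l ≤ B (i + 1)) ∧
    (∀ (i : ℕ) (l : Fin (r (i + 1))), FreeHomog k R 𝒜 (dgs i) (g i l) (dgs (i + 1) l)) ∧
    SolSpanBy R R g0 (g 0) ∧
    (∀ i : ℕ, SolSpanBy R (Fin (r i) → R) (g i) (g (i + 1)))

/-- the Artin–Zhang property for a graded module `M`. -/
def ArtinZhang (ℳ : ℤ → Submodule k M) [IsScalarTower k Rᵐᵒᵖ M] : Prop :=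
  ∀ h : ℤ → ℕ, ∃ d : ℤ, 0 < d ∧
    (∀ L : Submodule Rᵐᵒᵖ M, L.FG → hilb k R M ℳ L = h → GenLE k R M ℳ L d) ∧
    (∀ L : Submodule Rᵐᵒᵖ M, GenLE k R M ℳ L d →
      (∀ j ≤ d, hilb k R M ℳ L j = h j) → hilb k R M ℳ L = h)

/-- `M` is effective for series: for each `d`, only finitely many Hilbert series of
submodules generated in degrees `≤ d`. -/
def EffForSeries (ℳ : ℤ → Submodule k M) [IsScalarTower k Rᵐᵒᵖ M] : Prop :=
  ∀ d : ℤ, {h : ℤ → ℕ | ∃ L : Submodule Rᵐᵒᵖ M,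
    GenLE k R M ℳ L d ∧ h = hilb k R M ℳ L}.Finite

/-- `M` is effective for generators: the Hilbert series of a finitely generated
submodule bounds the degrees of its generators. -/
def EffForGen (ℳ : ℤ → Submodule k M) [IsScalarTower k Rᵐᵒᵖ M] : Prop :=
  ∀ h : ℤ → ℕ, ∃ d : ℤ,
    ∀ L : Submodule Rᵐᵒᵖ M, L.FG → hilb k R M ℳ L = h → GenLE k R M ℳ L d

/-- bundled data of a graded `k`-algebra. -/
structure AlgData (k : Type) [Field k] : Type 1 where
  carrier : Type
  [ringStr : Ring carrier]
  [algStr : Algebra k carrier]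
  grading : ℕ → Submodule k carrier

attribute [instance] AlgData.ringStr AlgData.algStr

/-- bundled data of a graded right `R`-module. -/
structure ModData (k R : Type) [Field k] [Ring R] [Algebra k R] : Type 1 where
  carrier : Type
  [acg : AddCommGroup carrier]
  [modR : Module Rᵐᵒᵖ carrier]
  [modk : Module k carrier]
  [tower : IsScalarTower k Rᵐᵒᵖ carrier]
  grading : ℤ → Submodule k carrier

attribute [instance] ModData.acg ModData.modR ModData.modk ModData.tower


section Toolkit
variable {k : Type} [Field k]
variable {V : Type} [AddCommGroup V] [Module k V] {ι : Type} [DecidableEq ι]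
  {𝒩 : ι → Submodule k V}

noncomputable def dcp (hI : DirectSum.IsInternal 𝒩) :
    V ≃ DirectSum ι (fun i => ↥(𝒩 i)) :=
  (Equiv.ofBijective _ hI).symm

lemma coe_dcp (hI : DirectSum.IsInternal 𝒩) (x : V) :
    DirectSum.coeAddMonoidHom 𝒩 (dcp hI x) = x := by
  have h : DirectSum.coeAddMonoidHom 𝒩 (dcp hI x) =
      (Equiv.ofBijective _ hI) (dcp hI x) := rfl
  rw [h]
  exact Equiv.apply_symm_apply _ x

lemma dcp_spec (hI : DirectSum.IsInternal 𝒩) (x : V) :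
    ∃ s : Finset ι, x = (∑ c ∈ s, ((dcp hI x c : V))) ∧ ∀ c ∉ s, dcp hI x c = 0 := by
  classical
  refine ⟨(dcp hI x).support, ?_, fun c hc => DFinsupp.notMem_support_iff.mp hc⟩
  have h := DirectSum.sum_support_of (x := dcp hI x)
  calc x = DirectSum.coeAddMonoidHom 𝒩 (dcp hI x) := (coe_dcp hI x).symm
    _ = DirectSum.coeAddMonoidHom 𝒩 (∑ i ∈ (dcp hI x).support,
          DirectSum.of (fun i => ↥(𝒩 i)) i (dcp hI x i)) := by rw [h]
    _ = ∑ i ∈ (dcp hI x).support, ((dcp hI x i : V)) := by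
          rw [map_sum]
          exact Finset.sum_congr rfl fun c _ => DirectSum.coeAddMonoidHom_of _ _ _

lemma dcp_of_mem (hI : DirectSum.IsInternal 𝒩) {x : V} {c0 : ι} (hx : x ∈ 𝒩 c0) (c : ι) :
    (dcp hI x c : V) = if c0 = c then x else 0 := by
  have h1 : dcp hI x = DirectSum.of (fun i => ↥(𝒩 i)) c0 ⟨x, hx⟩ := by
    rw [show dcp hI = (Equiv.ofBijective _ hI).symm from rfl,
      Equiv.symm_apply_eq]
    exact (DirectSum.coeAddMonoidHom_of 𝒩 c0 ⟨x, hx⟩).symm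
  rw [h1, DirectSum.of_apply]
  split
  · next h => subst h; rfl
  · next h => rfl

lemma dcp_zero_of_sum (hI : DirectSum.IsInternal 𝒩) (s : Finset ι) (f : ι → V)
    (hf : ∀ c ∈ s, f c ∈ 𝒩 c) (h0 : (∑ c ∈ s, f c) = 0) : ∀ c ∈ s, f c = 0 := by
  classical
  intro c hc
  set g : DirectSum ι (fun i => ↥(𝒩 i)) :=
    ∑ b ∈ s.attach, DirectSum.of (fun i => ↥(𝒩 i)) b.1 ⟨f b.1, hf b.1 b.2⟩
    with hg
  have hco : DirectSum.coeAddMonoidHom 𝒩 g = 0 := by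
    rw [hg, map_sum]
    have h2 : ∀ b ∈ s.attach, DirectSum.coeAddMonoidHom 𝒩
        (DirectSum.of (fun i => ↥(𝒩 i)) b.1 ⟨f b.1, hf b.1 b.2⟩) = f b.1 :=
      fun b _ => DirectSum.coeAddMonoidHom_of _ _ _
    rw [Finset.sum_congr rfl h2, Finset.sum_attach, h0]
  have hg0 : g = 0 := by
    apply hI.injective
    rw [hco, map_zero]
  have h3 : (∑ b ∈ s.attach,
      ((DirectSum.of (fun i => ↥(𝒩 i)) b.1 ⟨f b.1, hf b.1 b.2⟩) c)) = 0 := by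
    have h4 : (DFinsupp.evalAddMonoidHom (β := fun i => ↥(𝒩 i)) c) g = 0 := by
      rw [hg0]; simp
    rw [hg, map_sum] at h4
    exact h4
  rw [Finset.sum_eq_single (⟨c, hc⟩ : {x // x ∈ s})] at h3
  · rw [DirectSum.of_apply, dif_pos rfl] at h3
    exact congrArg Subtype.val h3
  · intro b _ hb
    rw [DirectSum.of_apply, dif_neg]
    intro h; apply hb; exact Subtype.ext h
  · intro h; exact absurd (Finset.mem_attach _ _) h

end Toolkit


section Machinery
variable {k : Type} [Field k] {R : Type} [Ring R] [Algebra k R]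
variable {𝒜 : ℕ → Submodule k R}

lemma grZ_natCast (i : ℕ) : grZ k R 𝒜 (i : ℤ) = 𝒜 i := by
  simp [grZ]

lemma grZ_neg {j : ℤ} (hj : j < 0) : grZ k R 𝒜 j = ⊥ := by
  simp [grZ, not_le.mpr hj]

lemma grZ_mul (hconn : IsConnAlg k R 𝒜) {x y : R} {α β : ℤ}
    (hx : x ∈ grZ k R 𝒜 α) (hy : y ∈ grZ k R 𝒜 β) : x * y ∈ grZ k R 𝒜 (α + β) := by
  by_cases hα : 0 ≤ α
  · by_cases hβ : 0 ≤ β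
    · simp only [grZ, if_pos hα, if_pos hβ] at hx hy
      have h := hconn.1 _ _ _ hx _ hy
      simp only [grZ, if_pos (add_nonneg hα hβ)]
      have : (α + β).toNat = α.toNat + β.toNat := by omega
      rwa [this]
    · simp only [grZ, if_neg hβ, Submodule.mem_bot] at hy
      rw [hy, mul_zero]; exact zero_mem _
  · simp only [grZ, if_neg hα, Submodule.mem_bot] at hx
    rw [hx, zero_mul]; exact zero_mem _

lemma mem_grZ_of_A {r : R} {i : ℕ} (hr : r ∈ 𝒜 i) : r ∈ grZ k R 𝒜 (i : ℤ) := by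
  rwa [grZ_natCast]

lemma one_mem_grZ0 (hconn : IsConnAlg k R 𝒜) : (1 : R) ∈ grZ k R 𝒜 0 := by
  have : grZ k R 𝒜 0 = 𝒜 0 := grZ_natCast (i := 0)
  rw [this, hconn.2.2]
  exact Submodule.mem_span_singleton_self _

lemma algebraMap_mem_grZ0 (hconn : IsConnAlg k R 𝒜) (c : k) :
    algebraMap k R c ∈ grZ k R 𝒜 0 := by
  rw [Algebra.algebraMap_eq_smul_one]
  exact Submodule.smul_mem _ _ (one_mem_grZ0 hconn)

lemma isInternal_grZ (hconn : IsConnAlg k R 𝒜) : DirectSum.IsInternal (grZ k R 𝒜) := by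
  rw [DirectSum.isInternal_submodule_iff_iSupIndep_and_iSup_eq_top]
  obtain ⟨-, hint, -⟩ := hconn
  have hind := hint.submodule_iSupIndep
  have htop := hint.submodule_iSup_eq_top
  constructor
  · intro j
    by_cases hj : 0 ≤ j
    · have hgj : grZ k R 𝒜 j = 𝒜 j.toNat := by simp [grZ, if_pos hj]
      rw [hgj]
      refine Disjoint.mono_right ?_ (hind j.toNat)
      apply iSup_le; intro j'
      apply iSup_le; intro hne
      by_cases hj' : 0 ≤ j'
      · have hgj' : grZ k R 𝒜 j' = 𝒜 j'.toNat := by simp [grZ, if_pos hj']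
        rw [hgj']
        have hne' : j'.toNat ≠ j.toNat := by omega
        exact le_iSup₂ (f := fun i (_ : i ≠ j.toNat) => 𝒜 i) j'.toNat hne'
      · rw [grZ_neg (by omega)]; exact bot_le
    · rw [grZ_neg (by omega)]; exact disjoint_bot_left
  · rw [eq_top_iff, ← htop]
    apply iSup_le; intro i
    rw [← grZ_natCast (𝒜 := 𝒜) i]
    exact le_iSup _ (i : ℤ)

lemma op_smul_eq_mul' (r x : R) : (op r) • x = x * r := rfl

lemma isGradedMod_R (hconn : IsConnAlg k R 𝒜) : IsGradedMod k R R 𝒜 (grZ k R 𝒜) := by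
  refine ⟨?_, isInternal_grZ hconn⟩
  intro i j r hr x hx
  rw [op_smul_eq_mul']
  exact grZ_mul hconn hx (mem_grZ_of_A hr)

lemma op_algebraMap_smul {M : Type} [AddCommGroup M] [Module Rᵐᵒᵖ M] [Module k M]
    [IsScalarTower k Rᵐᵒᵖ M] (c : k) (x : M) : (op (algebraMap k R c)) • x = c • x := by
  rw [Algebra.algebraMap_eq_smul_one, MulOpposite.op_smul, smul_assoc]
  norm_num

end Machinery

section FreeMod
variable {k : Type} [Field k] {R : Type} [Ring R] [Algebra k R]
variable {ι : Type} [Fintype ι] [DecidableEq ι]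
variable {M : Type} [AddCommGroup M] [Module Rᵐᵒᵖ M] [Module k M]

/-- the total map `v ↦ ∑ opp (v i) • a i`. -/
def tot (R : Type) [Ring R] {M : Type} [AddCommGroup M] [Module Rᵐᵒᵖ M]
    {ι : Type} [Fintype ι] (a : ι → M) : (ι → R) →ₗ[Rᵐᵒᵖ] M where
  toFun v := ∑ i, op (v i) • a i
  map_add' v w := by
    rw [← Finset.sum_add_distrib]
    refine Finset.sum_congr rfl fun i _ => ?_
    have : op ((v + w) i) = op (v i) + op (w i) := by simp
    rw [this, add_smul]
  map_smul' r v := by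
    rw [RingHom.id_apply, Finset.smul_sum]
    refine Finset.sum_congr rfl fun i _ => ?_
    have h1 : op ((r • v) i) = r * op (v i) := by
      simp [MulOpposite.smul_eq_mul_unop]
    rw [h1, mul_smul]

omit [DecidableEq ι] in
lemma tot_apply (a : ι → M) (v : ι → R) : tot R a v = ∑ i, op (v i) • a i := rfl

/-- k-linear version of the total map. -/
def totk (k : Type) [Field k] (R : Type) [Ring R] [Algebra k R] {M : Type}
    [AddCommGroup M] [Module Rᵐᵒᵖ M] [Module k M] [IsScalarTower k Rᵐᵒᵖ M]
    {ι : Type} [Fintype ι] (a : ι → M) : (ι → R) →ₗ[k] M where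
  toFun v := ∑ i, op (v i) • a i
  map_add' v w := by
    rw [← Finset.sum_add_distrib]
    refine Finset.sum_congr rfl fun i _ => ?_
    have : op ((v + w) i) = op (v i) + op (w i) := by simp
    rw [this, add_smul]
  map_smul' c v := by
    rw [RingHom.id_apply, Finset.smul_sum]
    refine Finset.sum_congr rfl fun i _ => ?_
    have h1 : op ((c • v) i) = c • op (v i) := by simp
    rw [h1, smul_assoc]

omit [DecidableEq ι] in
lemma totk_apply [IsScalarTower k Rᵐᵒᵖ M] (a : ι → M) (v : ι → R) :
    totk k R a v = ∑ i, op (v i) • a i := rfl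

omit [DecidableEq ι] in
lemma mem_span_range_iff_op (a : ι → M) (x : M) :
    x ∈ Submodule.span Rᵐᵒᵖ (Set.range a) ↔ ∃ v : ι → R, (∑ i, op (v i) • a i) = x := by
  rw [Submodule.mem_span_range_iff_exists_fun]
  constructor
  · rintro ⟨c, hc⟩
    exact ⟨fun i => unop (c i), by simpa using hc⟩
  · rintro ⟨v, hv⟩
    exact ⟨fun i => op (v i), by simpa using hv⟩

omit [DecidableEq ι] in
lemma range_tot (a : ι → M) :
    LinearMap.range (tot R a) = Submodule.span Rᵐᵒᵖ (Set.range a) := by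
  ext x
  rw [LinearMap.mem_range, mem_span_range_iff_op]
  exact ⟨fun ⟨v, hv⟩ => ⟨v, hv⟩, fun ⟨v, hv⟩ => ⟨v, hv⟩⟩

lemma sum_op_single (v : ι → R) : (∑ i, op (v i) • Pi.single i (1 : R)) = v := by
  funext l
  rw [Finset.sum_apply]
  have h1 : ∀ i, (op (v i) • (Pi.single i (1 : R) : ι → R)) l = (Pi.single i (v i) : ι → R) l := by
    intro i
    rw [Pi.smul_apply, op_smul_eq_mul']
    by_cases h : i = l
    · subst h; simp
    · simp [Pi.single_apply, h]
  rw [Finset.sum_congr rfl fun i _ => h1 i]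
  simp [Pi.single_apply]

/-- the grading of the free module `ι → R` with generator degrees `dg`. -/
noncomputable def Fgr (𝒜 : ℕ → Submodule k R) (dg : ι → ℤ) (j : ℤ) : Submodule k (ι → R) :=
  Submodule.pi Set.univ (fun i => grZ k R 𝒜 (j - dg i))

variable {𝒜 : ℕ → Submodule k R}

lemma mem_Fgr {dg : ι → ℤ} {w : ι → R} {j : ℤ} :
    w ∈ Fgr 𝒜 dg j ↔ ∀ i, w i ∈ grZ k R 𝒜 (j - dg i) := by
  rw [Fgr, Submodule.mem_pi]
  exact ⟨fun h i => h i trivial, fun h i _ => h i⟩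

lemma fd_grZ (hlf : LocFin k R 𝒜) (c : ℤ) : FiniteDimensional k (grZ k R 𝒜 c) := by
  by_cases h : 0 ≤ c
  · have : grZ k R 𝒜 c = 𝒜 c.toNat := by simp [grZ, if_pos h]
    rw [this]; exact hlf _
  · rw [grZ_neg (by omega)]
    infer_instance

lemma fd_Fgr (hlf : LocFin k R 𝒜) (dg : ι → ℤ) (j : ℤ) :
    FiniteDimensional k (Fgr 𝒜 dg j) := by
  haveI : ∀ i, FiniteDimensional k (grZ k R 𝒜 (j - dg i)) := fun i => fd_grZ hlf _
  let f : (Fgr 𝒜 dg j) →ₗ[k] (∀ i, grZ k R 𝒜 (j - dg i)) :=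
    { toFun := fun x => fun i => ⟨x.1 i, (mem_Fgr.mp x.2) i⟩
      map_add' := fun x y => rfl
      map_smul' := fun c x => rfl }
  have hinj : Function.Injective f := by
    intro x y h
    apply Subtype.ext
    funext i
    exact congrArg Subtype.val (congrFun h i)
  exact FiniteDimensional.of_injective f hinj

lemma isInternal_Fgr (hconn : IsConnAlg k R 𝒜) (dg : ι → ℤ) :
    DirectSum.IsInternal (Fgr 𝒜 dg (k := k) (R := R)) := by
  have hZ := isInternal_grZ hconn
  have hind := hZ.submodule_iSupIndep
  have htop := hZ.submodule_iSup_eq_top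
  rw [DirectSum.isInternal_submodule_iff_iSupIndep_and_iSup_eq_top]
  constructor
  · intro j
    rw [disjoint_iff_inf_le]
    intro x hx
    obtain ⟨hx1, hx2⟩ := Submodule.mem_inf.mp hx
    rw [Submodule.mem_bot]
    funext i
    have hxi1 : x i ∈ grZ k R 𝒜 (j - dg i) := mem_Fgr.mp hx1 i
    have hxi2 : x i ∈ ⨆ (c : ℤ) (_ : c ≠ j - dg i), grZ k R 𝒜 c := by
      have hmap : (LinearMap.proj i : (ι → R) →ₗ[k] R) x ∈
          Submodule.map (LinearMap.proj i) (⨆ (j' : ℤ) (_ : j' ≠ j), Fgr 𝒜 dg j') :=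
        ⟨x, hx2, rfl⟩
      rw [Submodule.map_iSup] at hmap
      refine (iSup_le fun j' => ?_ : _ ≤ ⨆ (c : ℤ) (_ : c ≠ j - dg i), grZ k R 𝒜 c) hmap
      rw [Submodule.map_iSup]
      apply iSup_le; intro hne
      have h1 : Submodule.map (LinearMap.proj (R := k) i) (Fgr 𝒜 dg j') ≤
          grZ k R 𝒜 (j' - dg i) := by
        rintro y ⟨w, hw, rfl⟩
        exact mem_Fgr.mp hw i
      refine le_trans h1 ?_
      exact le_iSup₂ (f := fun c (_ : c ≠ j - dg i) => grZ k R 𝒜 c) (j' - dg i) (by omega)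
    have := (hind (j - dg i)).le_bot (Submodule.mem_inf.mpr ⟨hxi1, hxi2⟩)
    simpa using this
  · rw [eq_top_iff]
    intro x _
    have hx : x = ∑ i, Pi.single i (x i) := by
      symm; exact Finset.univ_sum_single x
    rw [hx]
    apply Submodule.sum_mem
    intro i _
    have hxi : x i ∈ ⨆ c, grZ k R 𝒜 c := by rw [htop]; trivial
    refine Submodule.iSup_induction _ (motive := fun y => Pi.single i y ∈ ⨆ j, Fgr 𝒜 dg j)
      hxi ?_ ?_ ?_
    · intro c y hy
      have hmem : Pi.single i y ∈ Fgr 𝒜 dg (c + dg i) := by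
        rw [mem_Fgr]
        intro l
        by_cases h : i = l
        · subst h; simpa using hy
        · rw [Pi.single_apply, if_neg (by exact fun hh => h hh.symm)]
          exact zero_mem _
      exact (le_iSup (Fgr 𝒜 dg (k := k) (R := R)) (c + dg i)) hmem
    · simp
    · intro y z hy hz
      rw [Pi.single_add]
      exact add_mem hy hz

lemma isGradedMod_F (hconn : IsConnAlg k R 𝒜) (dg : ι → ℤ) :
    IsGradedMod k R (ι → R) 𝒜 (Fgr 𝒜 dg) := by
  refine ⟨?_, isInternal_Fgr hconn dg⟩
  intro i j r hr w hw
  rw [mem_Fgr]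
  intro l
  have h1 : (op r • w) l = w l * r := rfl
  rw [h1]
  have := grZ_mul hconn (mem_Fgr.mp hw l) (mem_grZ_of_A hr)
  have heq : (j - dg l + (i : ℤ)) = (j + i - dg l) := by ring
  rwa [heq] at this

end FreeMod

section L1
variable {k : Type} [Field k] {R : Type} [Ring R] [Algebra k R]
variable {ι : Type} [Fintype ι] [DecidableEq ι]
variable {M : Type} [AddCommGroup M] [Module Rᵐᵒᵖ M] [Module k M]
variable {𝒜 : ℕ → Submodule k R} {ℳ : ℤ → Submodule k M}

/-- Key lemma: a homogeneous element of the submodule generated by homogeneous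
elements `a i` is a combination with homogeneous coefficients of matching degrees. -/
lemma homog_rep (hconn : IsConnAlg k R 𝒜) (hgr : IsGradedMod k R M 𝒜 ℳ)
    {a : ι → M} {dg : ι → ℤ} (ha : ∀ i, a i ∈ ℳ (dg i)) {j : ℤ} {y : M}
    (hy : y ∈ ℳ j) (hyN : y ∈ Submodule.span Rᵐᵒᵖ (Set.range a)) :
    ∃ w : ι → R, (∀ i, w i ∈ grZ k R 𝒜 (j - dg i)) ∧ (∑ i, op (w i) • a i) = y := by
  classical
  obtain ⟨v, hv⟩ := (mem_span_range_iff_op a y).mp hyN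
  have hA : DirectSum.IsInternal 𝒜 := hconn.2.1
  choose s hs1 hs2 using fun i => dcp_spec hA (v i)
  set cmp : ℕ → ι → R := fun c i => ((dcp hA (v i) c : R)) with hcmp
  set w : ℤ → ι → R := fun δ i => if h : dg i ≤ δ then cmp (δ - dg i).toNat i else 0 with hw
  have hwmem : ∀ δ i, w δ i ∈ grZ k R 𝒜 (δ - dg i) := by
    intro δ i
    simp only [hw]
    by_cases h : dg i ≤ δ
    · rw [dif_pos h]
      have hδ : (0 : ℤ) ≤ δ - dg i := by omega
      have : grZ k R 𝒜 (δ - dg i) = 𝒜 (δ - dg i).toNat := by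
        simp only [grZ, if_pos hδ]
      rw [this]
      exact (dcp hA (v i) _).2
    · rw [dif_neg h]
      exact zero_mem _
  set yd : ℤ → M := fun δ => ∑ i, op (w δ i) • a i with hyd
  have hydmem : ∀ δ, yd δ ∈ ℳ δ := by
    intro δ
    apply Submodule.sum_mem
    intro i _
    by_cases h : dg i ≤ δ
    · have h1 : w δ i ∈ 𝒜 (δ - dg i).toNat := by
        simp only [hw]
        rw [dif_pos h]
        exact (dcp hA (v i) _).2
      have h2 := hgr.1 (δ - dg i).toNat (dg i) _ h1 _ (ha i)
      have h3 : dg i + ((δ - dg i).toNat : ℤ) = δ := by omega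
      rwa [h3] at h2
    · simp only [hw]
      rw [dif_neg h]
      simp
  set T : Finset ℤ := {j} ∪ Finset.biUnion Finset.univ
    (fun i => (s i).image (fun c : ℕ => dg i + (c : ℤ))) with hT
  have key : ∀ i, (∑ δ ∈ T, op (w δ i) • a i) = op (v i) • a i := by
    intro i
    have hsub : (s i).image (fun c : ℕ => dg i + (c : ℤ)) ⊆ T := by
      intro δ hδ
      rw [hT]
      exact Finset.mem_union_right _ (Finset.mem_biUnion.mpr ⟨i, Finset.mem_univ i, hδ⟩)
    rw [← Finset.sum_subset hsub ?zero]
    case zero =>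
      intro δ _ hδni
      have hwz : w δ i = 0 := by
        simp only [hw]
        by_cases h : dg i ≤ δ
        · rw [dif_pos h]
          by_cases hc : (δ - dg i).toNat ∈ s i
          · exfalso
            apply hδni
            apply Finset.mem_image.mpr
            exact ⟨(δ - dg i).toNat, hc, by omega⟩
          · simp only [hcmp]
            rw [hs2 i _ hc]
            rfl
        · rw [dif_neg h]
      rw [hwz]
      simp
    rw [Finset.sum_image (by intro x _ y _ h; have h' : dg i + (x : ℤ) = dg i + (y : ℤ) := h; omega)]
    have hterm : ∀ c ∈ s i, op (w (dg i + (c : ℤ)) i) • a i = op (cmp c i) • a i := by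
      intro c _
      congr 1
      simp only [hw]
      have harg : (dg i + (c : ℤ) - dg i).toNat = c := by omega
      rw [dif_pos (by omega), harg]
    rw [Finset.sum_congr rfl hterm]
    have hvi : v i = ∑ c ∈ s i, cmp c i := hs1 i
    rw [hvi]
    have hop : op (∑ c ∈ s i, cmp c i) = ∑ c ∈ s i, op (cmp c i) :=
      map_sum (MulOpposite.opAddEquiv : R ≃+ Rᵐᵒᵖ) _ _
    rw [hop, Finset.sum_smul]
  have hsum : (∑ δ ∈ T, yd δ) = y := by
    rw [hyd, Finset.sum_comm]
    rw [← hv]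
    exact Finset.sum_congr rfl fun i _ => key i
  have hjT : j ∈ T := by
    rw [hT]; exact Finset.mem_union_left _ (Finset.mem_singleton_self j)
  set g : ℤ → M := fun δ => if δ = j then yd δ - y else yd δ with hg
  have hgmem : ∀ δ ∈ T, g δ ∈ ℳ δ := by
    intro δ _
    simp only [hg]
    by_cases h : δ = j
    · rw [if_pos h]; subst h; exact sub_mem (hydmem δ) hy
    · rw [if_neg h]; exact hydmem δ
  have hgsum : (∑ δ ∈ T, g δ) = 0 := by
    have h1 : ∀ δ ∈ T, g δ = yd δ + (if δ = j then -y else 0) := by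
      intro δ _
      simp only [hg]
      by_cases h : δ = j
      · rw [if_pos h, if_pos h, sub_eq_add_neg]
      · rw [if_neg h, if_neg h, add_zero]
    rw [Finset.sum_congr rfl h1, Finset.sum_add_distrib, hsum,
      Finset.sum_ite_eq' T j (fun _ => -y), if_pos hjT]
    simp
  have hgz := dcp_zero_of_sum hgr.2 T g hgmem hgsum j hjT
  rw [hg] at hgz
  simp only [if_pos rfl] at hgz
  exact ⟨w j, hwmem j, by rw [← sub_eq_zero]; exact hgz⟩

end L1

section TotComb
variable {k : Type} [Field k] {R : Type} [Ring R] [Algebra k R]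
variable {ι : Type} [Fintype ι] [DecidableEq ι]
variable {M : Type} [AddCommGroup M] [Module Rᵐᵒᵖ M] [Module k M]
variable {𝒜 : ℕ → Submodule k R}

omit [DecidableEq ι] in
lemma tot_pt {ξ : Type} [Fintype ξ] [DecidableEq ξ] (d : ξ → ι → R) (w : ξ → R) (i : ι) :
    tot R d w i = ∑ l, d l i * w l := by
  rw [tot_apply, Finset.sum_apply]
  exact Finset.sum_congr rfl fun l _ => by rw [Pi.smul_apply, op_smul_eq_mul']

lemma tot_single (a : ι → M) (i0 : ι) : tot R a (Pi.single i0 1) = a i0 := by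
  rw [tot_apply, Finset.sum_eq_single i0]
  · simp
  · intro i _ hne
    rw [Pi.single_apply, if_neg hne]
    simp
  · intro h; exact absurd (Finset.mem_univ _) h

omit [DecidableEq ι] in
lemma tot_tot {ξ : Type} [Fintype ξ] [DecidableEq ξ] (a : ι → M) (d : ξ → ι → R) (w : ξ → R) :
    tot R a (tot R d w) = ∑ l, op (w l) • tot R a (d l) := by
  rw [tot_apply (a := d), map_sum]
  exact Finset.sum_congr rfl fun l _ => (tot R a).map_smul _ _

lemma tot_homog (hconn : IsConnAlg k R 𝒜) {ξ : Type} [Fintype ξ] [DecidableEq ξ]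
    {d : ξ → ι → R} {w : ξ → R} {e : ξ → ℤ} {dN : ι → ℤ} {j : ℤ}
    (hd : ∀ l i, d l i ∈ grZ k R 𝒜 (e l - dN i)) (hw : ∀ l, w l ∈ grZ k R 𝒜 (j - e l)) :
    ∀ i, tot R d w i ∈ grZ k R 𝒜 (j - dN i) := by
  intro i
  rw [tot_pt]
  apply Submodule.sum_mem
  intro l _
  have h := grZ_mul hconn (hd l i) (hw l)
  have heq : (e l - dN i) + (j - e l) = j - dN i := by ring
  rwa [heq] at h

lemma isGradedSub_span (hconn : IsConnAlg k R 𝒜) {α : ι → R} {dα : ι → ℤ}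
    (hα : ∀ i, α i ∈ grZ k R 𝒜 (dα i)) :
    IsGradedSub k R R (grZ k R 𝒜) (Submodule.span Rᵐᵒᵖ (Set.range α)) := by
  rw [IsGradedSub, Submodule.span_le]
  rintro x ⟨i, rfl⟩
  apply Submodule.subset_span
  exact ⟨Submodule.subset_span ⟨i, rfl⟩, dα i, hα i⟩

/-- syzygies of a single homogeneous equation in `R` are spanned by finitely many
homogeneous solutions (from graded coherence). -/
lemma syz_one (hconn : IsConnAlg k R 𝒜) (hcoh : GradedCoherent k R 𝒜)
    {α : ι → R} {dα : ι → ℤ} (hα : ∀ i, α i ∈ grZ k R 𝒜 (dα i)) :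
    ∃ (κ : Type) (_ : Fintype κ) (G : κ → ι → R) (f : κ → ℤ),
      (∀ q i, G q i ∈ grZ k R 𝒜 (f q - dα i)) ∧
      (∀ q, tot R α (G q) = 0) ∧
      ∀ v : ι → R, tot R α v = 0 → v ∈ Submodule.span Rᵐᵒᵖ (Set.range G) := by
  classical
  set I := Submodule.span Rᵐᵒᵖ (Set.range α) with hI
  have hIfg : I.FG := Submodule.fg_span (Set.finite_range α)
  obtain ⟨nx, x, dx, hx, hxspan, mx, hrel, erel, hrelhom, hrelsol⟩ :=
    hcoh I hIfg (isGradedSub_span hconn hα)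
  have hgrR := isGradedMod_R hconn
  -- homogeneous representations of the α i in terms of the x l
  have hrep1 : ∀ i, ∃ ci : Fin nx → R,
      (∀ l, ci l ∈ grZ k R 𝒜 (dα i - (dx l : ℤ))) ∧ tot R x ci = α i := by
    intro i
    have hyN : α i ∈ Submodule.span Rᵐᵒᵖ (Set.range x) := by
      rw [hxspan]; exact Submodule.subset_span ⟨i, rfl⟩
    obtain ⟨w, hw1, hw2⟩ := homog_rep (ℳ := grZ k R 𝒜) hconn hgrR
      (fun l => mem_grZ_of_A (hx l)) (hα i) hyN
    exact ⟨w, hw1, hw2⟩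
  choose c hc1 hc2 using hrep1
  -- homogeneous representations of the x l in terms of the α i
  have hrep2 : ∀ l, ∃ dl : ι → R,
      (∀ i, dl i ∈ grZ k R 𝒜 ((dx l : ℤ) - dα i)) ∧ tot R α dl = x l := by
    intro l
    have hyN : x l ∈ Submodule.span Rᵐᵒᵖ (Set.range α) := by
      rw [← hI, ← hxspan]; exact Submodule.subset_span ⟨l, rfl⟩
    obtain ⟨w, hw1, hw2⟩ := homog_rep (ℳ := grZ k R 𝒜) hconn hgrR hα
      (mem_grZ_of_A (hx l)) hyN
    exact ⟨w, hw1, hw2⟩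
  choose d hd1 hd2 using hrep2
  -- the two families of generators
  set G1 : ι → ι → R := fun i0 => Pi.single i0 1 - tot R d (c i0) with hG1
  set G2 : Fin mx → ι → R := fun p => tot R d (hrel p) with hG2
  have hG1hom : ∀ i0 i, G1 i0 i ∈ grZ k R 𝒜 (dα i0 - dα i) := by
    intro i0 i
    rw [hG1]
    simp only [Pi.sub_apply]
    apply sub_mem
    · by_cases h : i0 = i
      · subst h
        rw [Pi.single_apply, if_pos rfl]
        have h0 : dα i0 - dα i0 = 0 := by ring
        rw [h0]
        exact one_mem_grZ0 hconn
      · rw [Pi.single_apply, if_neg (fun hh => h hh.symm)]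
        exact zero_mem _
    · exact tot_homog hconn hd1 (hc1 i0) i
  have hG2hom : ∀ p i, G2 p i ∈ grZ k R 𝒜 (erel p - dα i) := by
    intro p i
    rw [hG2]
    exact tot_homog hconn hd1 (fun l => hrelhom p l) i
  have hxsol : ∀ p, tot R x (hrel p) = 0 := fun p => hrelsol.1 p
  have hG1sol : ∀ i0, tot R α (G1 i0) = 0 := by
    intro i0
    rw [hG1]
    simp only [map_sub]
    rw [tot_single, tot_tot]
    have h1 : ∀ l, op (c i0 l) • tot R α (d l) = op (c i0 l) • x l := by
      intro l; rw [hd2 l]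
    rw [Finset.sum_congr rfl fun l _ => h1 l]
    rw [show (∑ l, op (c i0 l) • x l) = tot R x (c i0) from rfl, hc2 i0]
    simp
  have hG2sol : ∀ p, tot R α (G2 p) = 0 := by
    intro p
    rw [hG2, tot_tot]
    have h1 : ∀ l, op (hrel p l) • tot R α (d l) = op (hrel p l) • x l := by
      intro l; rw [hd2 l]
    rw [Finset.sum_congr rfl fun l _ => h1 l]
    rw [show (∑ l, op (hrel p l) • x l) = tot R x (hrel p) from rfl, hxsol p]
  -- now assemble via a sum type
  refine ⟨ι ⊕ Fin mx, inferInstance, Sum.elim G1 G2, Sum.elim dα erel, ?_, ?_, ?_⟩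
  · rintro (i0 | p) i
    · exact hG1hom i0 i
    · exact hG2hom p i
  · rintro (i0 | p)
    · exact hG1sol i0
    · exact hG2sol p
  · intro v hv
    -- Cv is a syzygy of x
    set Cv : Fin nx → R := tot R c v with hCv
    have hCvsol : tot R x Cv = 0 := by
      rw [hCv, tot_tot]
      have h1 : ∀ i, op (v i) • tot R x (c i) = op (v i) • α i := by
        intro i; rw [hc2 i]
      rw [Finset.sum_congr rfl fun i _ => h1 i]
      exact hv
    have hCvspan : Cv ∈ Submodule.span Rᵐᵒᵖ (Set.range hrel) := hrelsol.2 Cv hCvsol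
    -- decompose v
    have hdec : v = tot R G1 v + tot R d Cv := by
      have h1 : tot R G1 v = v - tot R d (tot R c v) := by
        rw [hG1]
        have h2 : tot R (fun i0 => Pi.single i0 1 - tot R d (c i0)) v =
            tot R (fun i0 : ι => (Pi.single i0 1 : ι → R)) v -
            tot R (fun i0 => tot R d (c i0)) v := by
          simp only [tot_apply, smul_sub, Finset.sum_sub_distrib]
        rw [h2]
        congr 1
        · exact sum_op_single v
        · rw [tot_tot (a := d) (d := c)]
          rfl
      rw [h1, hCv]
      abel
    rw [hdec]
    apply Submodule.add_mem
    · have h1 : tot R G1 v ∈ Submodule.span Rᵐᵒᵖ (Set.range G1) := by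
        rw [tot_apply]
        apply Submodule.sum_mem
        intro i _
        exact Submodule.smul_mem _ _ (Submodule.subset_span ⟨i, rfl⟩)
      refine Submodule.span_mono ?_ h1
      rintro y ⟨i0, rfl⟩
      exact ⟨Sum.inl i0, rfl⟩
    · have h1 : tot R d Cv ∈ Submodule.map (tot R d)
          (Submodule.span Rᵐᵒᵖ (Set.range hrel)) := ⟨Cv, hCvspan, rfl⟩
      rw [Submodule.map_span, ← Set.range_comp] at h1
      refine Submodule.span_mono ?_ h1
      rintro y ⟨p, rfl⟩
      exact ⟨Sum.inr p, rfl⟩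

end TotComb

section Syz
variable {k : Type} [Field k] {R : Type} [Ring R] [Algebra k R]
variable {𝒜 : ℕ → Submodule k R}

lemma tot_R {ι : Type} [Fintype ι] (α : ι → R) (v : ι → R) :
    tot R α v = ∑ i, α i * v i := by
  rw [tot_apply]
  exact Finset.sum_congr rfl fun i _ => by rw [op_smul_eq_mul']

lemma row_eq {t : ℕ} {ι : Type} [Fintype ι] (g : ι → Fin t → R) (v : ι → R) (r : Fin t) :
    tot R g v r = ∑ i, g i r * v i := by
  rw [tot_apply, Finset.sum_apply]
  exact Finset.sum_congr rfl fun i _ => by rw [Pi.smul_apply, op_smul_eq_mul']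

lemma row_zero {t : ℕ} {ι : Type} [Fintype ι] (g : ι → Fin (t+1) → R) (v : ι → R) :
    tot R g v 0 = tot R (fun l => g l 0) v := by
  rw [row_eq, tot_R]

lemma row_switch {t : ℕ} {ι ξ : Type} [Fintype ι] [Fintype ξ] [DecidableEq ξ]
    (g : ι → Fin t → R) (G1 : ξ → ι → R) (w : ξ → R) (r : Fin t) :
    tot R g (tot R G1 w) r = ∑ q, (tot R g (G1 q) r) * w q := by
  rw [tot_tot (a := g), Finset.sum_apply]
  refine Finset.sum_congr rfl fun q _ => ?_
  rw [Pi.smul_apply, op_smul_eq_mul']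

/-- syzygies of a homogeneous system of equations in `R` are spanned by finitely
many homogeneous solutions. -/
lemma syz_sys (hconn : IsConnAlg k R 𝒜) (hcoh : GradedCoherent k R 𝒜) :
    ∀ (t : ℕ) (ι : Type) (_ : Fintype ι) (_ : DecidableEq ι)
      (dN : ι → ℤ) (dt : Fin t → ℤ) (g : ι → Fin t → R),
      (∀ l r, g l r ∈ grZ k R 𝒜 (dN l - dt r)) →
    ∃ (κ : Type) (_ : Fintype κ) (_ : DecidableEq κ) (G : κ → ι → R) (f : κ → ℤ),
      (∀ q i, G q i ∈ grZ k R 𝒜 (f q - dN i)) ∧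
      (∀ q, tot R g (G q) = 0) ∧
      ∀ v : ι → R, tot R g v = 0 → v ∈ Submodule.span Rᵐᵒᵖ (Set.range G) := by
  intro t
  induction t with
  | zero =>
    intro ι _ _ dN dt g _
    refine ⟨ι, inferInstance, inferInstance, fun i0 => Pi.single i0 1, dN, ?_, ?_, ?_⟩
    · intro q i
      change (Pi.single q 1 : ι → R) i ∈ _
      by_cases h : q = i
      · subst h
        rw [Pi.single_apply, if_pos rfl]
        have h0 : dN q - dN q = 0 := by ring
        rw [h0]; exact one_mem_grZ0 hconn
      · rw [Pi.single_apply, if_neg (fun hh => h hh.symm)]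
        exact zero_mem _
    · intro q
      apply funext
      intro r
      exact Fin.elim0 r
    · intro v _
      rw [← sum_op_single v]
      apply Submodule.sum_mem
      intro i _
      exact Submodule.smul_mem _ _ (Submodule.subset_span ⟨i, rfl⟩)
  | succ t ih =>
    intro ι _ _ dN dt g hg
    set α : ι → R := fun l => g l 0 with hα
    have hαhom : ∀ l, α l ∈ grZ k R 𝒜 (dN l - dt 0) := fun l => hg l 0
    obtain ⟨κ1, hκ1f, G1, f1, hG1hom, hG1sol, hG1span⟩ :=
      syz_one hconn hcoh (dα := fun l => dN l - dt 0) hαhom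
    letI := hκ1f
    letI : DecidableEq κ1 := Classical.decEq κ1
    set b : κ1 → Fin t → R := fun q r => tot R g (G1 q) r.succ with hb
    have hbhom : ∀ q r, b q r ∈ grZ k R 𝒜 ((f1 q + dt 0) - (dt r.succ)) := by
      intro q r
      simp only [hb]
      rw [row_eq]
      apply Submodule.sum_mem
      intro i _
      have h1 := grZ_mul hconn (hg i r.succ) (hG1hom q i)
      have heq : (dN i - dt r.succ) + (f1 q - (dN i - dt 0)) =
          (f1 q + dt 0) - dt r.succ := by ring
      rwa [heq] at h1
    obtain ⟨κ2, hκ2f, hκ2d, U, f2, hUhom, hUsol, hUspan⟩ :=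
      ih κ1 inferInstance inferInstance (fun q => f1 q + dt 0) (fun r => dt r.succ) b hbhom
    letI := hκ2f
    have hG1hom' : ∀ q i', G1 q i' ∈ grZ k R 𝒜 ((f1 q + dt 0) - dN i') := by
      intro q i'
      have h1 := hG1hom q i'
      have heq : f1 q - (dN i' - dt 0) = (f1 q + dt 0) - dN i' := by ring
      rwa [heq] at h1
    refine ⟨κ2, inferInstance, inferInstance, fun p => tot R G1 (U p), f2, ?_, ?_, ?_⟩
    · intro p i
      exact tot_homog hconn (e := fun q => f1 q + dt 0) (dN := dN) (j := f2 p)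
        (fun q i' => hG1hom' q i') (fun q => hUhom p q) i
    · intro p
      show tot R g (tot R G1 (U p)) = 0
      apply funext
      intro r
      rw [row_switch]
      have hz : (0 : Fin (t+1) → R) r = 0 := rfl
      rw [hz]
      induction r using Fin.cases with
      | zero =>
        have h1 : ∀ q, tot R g (G1 q) 0 * U p q = 0 := by
          intro q
          rw [row_zero, ← hα, hG1sol q, zero_mul]
        rw [Finset.sum_congr rfl fun q _ => h1 q, Finset.sum_const_zero]
      | succ r =>
        have h1 : ∀ q, tot R g (G1 q) r.succ * U p q = b q r * U p q := by
          intro q; simp only [hb]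
        rw [Finset.sum_congr rfl fun q _ => h1 q, ← row_eq, hUsol p]
        rfl
    · intro v hv
      have hrow0 : tot R α v = 0 := by
        rw [← row_zero, hv]
        rfl
      obtain ⟨w, hw⟩ := (mem_span_range_iff_op G1 v).mp (hG1span v hrow0)
      have hwv : tot R G1 w = v := hw
      have hwsol : tot R b w = 0 := by
        apply funext
        intro r
        have h1 : ∀ q, b q r * w q = tot R g (G1 q) r.succ * w q := by
          intro q; simp only [hb]
        rw [row_eq, Finset.sum_congr rfl fun q _ => h1 q, ← row_switch, hwv, hv]
        rfl
      have hwspan := hUspan w hwsol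
      have h2 : v ∈ Submodule.map (tot R G1) (Submodule.span Rᵐᵒᵖ (Set.range U)) :=
        ⟨w, hwspan, hwv⟩
      rw [Submodule.map_span, ← Set.range_comp] at h2
      exact h2

end Syz

section SolsFG
variable {k : Type} [Field k] {R : Type} [Ring R] [Algebra k R]
variable {M : Type} [AddCommGroup M] [Module Rᵐᵒᵖ M] [Module k M]
variable {𝒜 : ℕ → Submodule k R} {ℳ : ℤ → Submodule k M}

lemma tot_sum_split {ι₁ ι₂ : Type} [Fintype ι₁] [Fintype ι₂]
    (c : ι₁ → M) (h : ι₂ → M) (z : ι₁ ⊕ ι₂ → R) :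
    tot R (Sum.elim c (fun p => -(h p))) z =
      tot R c (fun i => z (Sum.inl i)) - tot R h (fun p => z (Sum.inr p)) := by
  rw [tot_apply, tot_apply, tot_apply, Fintype.sum_sum_type]
  have h2 : ∀ p, op (z (Sum.inr p)) • (Sum.elim c (fun p => -(h p)) (Sum.inr p)) =
      -(op (z (Sum.inr p)) • h p) := by
    intro p
    rw [Sum.elim_inr, smul_neg]
  rw [Finset.sum_congr rfl fun p _ => h2 p, Finset.sum_neg_distrib, sub_eq_add_neg]
  have h3 : ∀ i, op (z (Sum.inl i)) • (Sum.elim c (fun p => -(h p)) (Sum.inl i)) =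
      op (z (Sum.inl i)) • c i := fun i => by rw [Sum.elim_inl]
  rw [Finset.sum_congr rfl fun i _ => h3 i]

/-- Over a graded coherent algebra, the module of solutions of an equation with
coefficients in a finitely presented graded module is finitely generated. -/
lemma sols_fg (hconn : IsConnAlg k R 𝒜) (hcoh : GradedCoherent k R 𝒜)
    (hgrM : IsGradedMod k R M 𝒜 ℳ)
    {t : ℕ} {b : Fin t → M} {db : Fin t → ℤ} (hb : ∀ l, b l ∈ ℳ (db l))
    (hbspan : Submodule.span Rᵐᵒᵖ (Set.range b) = ⊤)
    {mr : ℕ} {hrel : Fin mr → Fin t → R} {erel : Fin mr → ℤ}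
    (hrelhom : ∀ p l, hrel p l ∈ grZ k R 𝒜 (erel p - db l))
    (hrelsol : SolSpanBy R M b hrel)
    {ι : Type} [Fintype ι] [DecidableEq ι] (a : ι → M) (dg : ι → ℤ)
    (ha : ∀ i, a i ∈ ℳ (dg i)) : (LinearMap.ker (tot R a)).FG := by
  classical
  have hrep : ∀ i, ∃ w : Fin t → R,
      (∀ l, w l ∈ grZ k R 𝒜 (dg i - db l)) ∧ (∑ l, op (w l) • b l) = a i := by
    intro i
    exact homog_rep hconn hgrM hb (ha i) (by rw [hbspan]; trivial)
  choose c hc1 hc2 using hrep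
  have hc2' : ∀ i, tot R b (c i) = a i := fun i => hc2 i
  have hrelsol1 : ∀ p, tot R b (hrel p) = 0 := fun p => hrelsol.1 p
  set g' : (ι ⊕ Fin mr) → Fin t → R := Sum.elim c (fun p => -(hrel p)) with hg'
  have hg'hom : ∀ x r, g' x r ∈ grZ k R 𝒜 ((Sum.elim dg erel x) - db r) := by
    rintro (i | p) r
    · exact hc1 i r
    · exact neg_mem (hrelhom p r)
  obtain ⟨κ2, hκ2f, hκ2d, GG, ff, hGGhom, hGGsol, hGGspan⟩ :=
    syz_sys hconn hcoh t (ι ⊕ Fin mr) inferInstance inferInstance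
      (Sum.elim dg erel) db g' hg'hom
  letI := hκ2f
  set gen : κ2 → ι → R := fun p2 => (GG p2) ∘ Sum.inl with hgen
  have hkey : ∀ v : ι → R, tot R a v = tot R b (tot R c v) := by
    intro v
    rw [tot_tot (a := b) (d := c)]
    rw [tot_apply (a := a)]
    exact Finset.sum_congr rfl fun i _ => by rw [hc2' i]
  have hker : LinearMap.ker (tot R a) = Submodule.span Rᵐᵒᵖ (Set.range gen) := by
    apply le_antisymm
    · intro v hv
      rw [LinearMap.mem_ker, hkey] at hv
      have hW : tot R c v ∈ Submodule.span Rᵐᵒᵖ (Set.range hrel) := hrelsol.2 _ hv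
      obtain ⟨u, hu⟩ := (mem_span_range_iff_op hrel (tot R c v)).mp hW
      have hu' : tot R hrel u = tot R c v := hu
      set z : (ι ⊕ Fin mr) → R := Sum.elim v u with hz
      have hzsol : tot R g' z = 0 := by
        rw [hg', tot_sum_split]
        have h1 : (fun i => z (Sum.inl i)) = v := rfl
        have h2 : (fun p => z (Sum.inr p)) = u := rfl
        rw [h1, h2, hu']
        exact sub_self _
      have hzspan := hGGspan z hzsol
      obtain ⟨y, hy⟩ := (mem_span_range_iff_op GG z).mp hzspan
      have hveq : v = tot R gen y := by
        funext i
        have h3 : z (Sum.inl i) = v i := rfl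
        rw [← h3, ← hy]
        rw [tot_pt]
        rw [Finset.sum_apply]
        refine Finset.sum_congr rfl fun p2 _ => ?_
        rw [Pi.smul_apply, op_smul_eq_mul']
        rfl
      rw [hveq, tot_apply]
      apply Submodule.sum_mem
      intro p2 _
      exact Submodule.smul_mem _ _ (Submodule.subset_span ⟨p2, rfl⟩)
    · rw [Submodule.span_le]
      rintro y ⟨p2, rfl⟩
      rw [SetLike.mem_coe, LinearMap.mem_ker, hkey]
      have h1 := hGGsol p2
      rw [hg', tot_sum_split] at h1
      have h2 : tot R c (fun i => GG p2 (Sum.inl i)) =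
          tot R hrel (fun p => GG p2 (Sum.inr p)) := by
        rw [sub_eq_zero] at h1
        exact h1
      show tot R b (tot R c (fun i => GG p2 (Sum.inl i))) = 0
      rw [h2, tot_tot (a := b) (d := hrel)]
      rw [Finset.sum_congr rfl fun p (_ : p ∈ Finset.univ) => by rw [hrelsol1 p]]
      simp
  rw [hker]
  exact Submodule.fg_span (Set.finite_range gen)

end SolsFG

section Pres
variable {k : Type} [Field k] {R : Type} [Ring R] [Algebra k R]
variable {𝒜 : ℕ → Submodule k R}

lemma modFinPres_F (hconn : IsConnAlg k R 𝒜) {n : ℕ} (dg : Fin n → ℤ) :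
    ModFinPres k R (Fin n → R) 𝒜 (Fgr 𝒜 dg) := by
  refine ⟨n, fun i => Pi.single i 1, dg, ?_, ?_, 0, Fin.elim0, Fin.elim0,
    fun j => j.elim0, fun j => j.elim0, ?_⟩
  · intro i
    rw [mem_Fgr]
    intro l
    show (Pi.single i 1 : Fin n → R) l ∈ _
    by_cases h : i = l
    · subst h
      rw [Pi.single_apply, if_pos rfl]
      have h0 : dg i - dg i = 0 := by ring
      rw [h0]; exact one_mem_grZ0 hconn
    · rw [Pi.single_apply, if_neg (fun hh => h hh.symm)]
      exact zero_mem _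
  · rw [eq_top_iff]
    intro v _
    rw [← sum_op_single v]
    apply Submodule.sum_mem
    intro i _
    exact Submodule.smul_mem _ _ (Submodule.subset_span ⟨i, rfl⟩)
  · intro v hv
    have hv' : (∑ i, op (v i) • Pi.single i (1 : R)) = 0 := hv
    rw [sum_op_single v] at hv'
    rw [hv']
    exact zero_mem _

lemma modFinPres_R (hconn : IsConnAlg k R 𝒜) :
    ModFinPres k R R 𝒜 (grZ k R 𝒜) := by
  refine ⟨1, fun _ => 1, fun _ => 0, fun _ => one_mem_grZ0 hconn, ?_, 0, Fin.elim0,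
    Fin.elim0, fun j => j.elim0, fun j => j.elim0, ?_⟩
  · rw [eq_top_iff]
    intro r _
    have h1 : r = op r • (1 : R) := by rw [op_smul_eq_mul', one_mul]
    rw [h1]
    exact Submodule.smul_mem _ _ (Submodule.subset_span ⟨0, rfl⟩)
  · intro v hv
    have hv' : (∑ i : Fin 1, op (v i) • (1 : R)) = 0 := hv
    rw [Fin.sum_univ_one, op_smul_eq_mul', one_mul] at hv'
    have : v = 0 := by
      funext i
      have hi : i = 0 := Subsingleton.elim i 0
      rw [hi, hv']; rfl
    rw [this]
    exact zero_mem _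

end Pres

section RankNull
variable {k : Type} [Field k] {R : Type} [Ring R] [Algebra k R]
variable {M : Type} [AddCommGroup M] [Module Rᵐᵒᵖ M] [Module k M]
  [IsScalarTower k Rᵐᵒᵖ M]
variable {𝒜 : ℕ → Submodule k R} {ℳ : ℤ → Submodule k M}
variable {ι : Type} [Fintype ι] [DecidableEq ι]

lemma totk_mem_deg (hgrM : IsGradedMod k R M 𝒜 ℳ) {a : ι → M} {dg : ι → ℤ}
    (ha : ∀ i, a i ∈ ℳ (dg i)) {j : ℤ} {w : ι → R}
    (hw : ∀ i, w i ∈ grZ k R 𝒜 (j - dg i)) : totk k R a w ∈ ℳ j := by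
  rw [totk_apply]
  apply Submodule.sum_mem
  intro i _
  by_cases h : dg i ≤ j
  · have h1 : w i ∈ 𝒜 (j - dg i).toNat := by
      have h2 := hw i
      have h3 : grZ k R 𝒜 (j - dg i) = 𝒜 (j - dg i).toNat := by
        simp only [grZ, if_pos (by omega : (0:ℤ) ≤ j - dg i)]
      rwa [h3] at h2
    have h4 := hgrM.1 (j - dg i).toNat (dg i) _ h1 _ (ha i)
    have h5 : dg i + ((j - dg i).toNat : ℤ) = j := by omega
    rwa [h5] at h4
  · have h1 : w i = 0 := by
      have h2 := hw i
      rw [grZ_neg (by omega)] at h2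
      simpa using h2
    rw [h1]
    simp

lemma range_totk_deg (hconn : IsConnAlg k R 𝒜) (hgrM : IsGradedMod k R M 𝒜 ℳ)
    {a : ι → M} {dg : ι → ℤ} (ha : ∀ i, a i ∈ ℳ (dg i)) (j : ℤ) :
    LinearMap.range ((totk k R a).domRestrict (Fgr 𝒜 dg j)) =
      (ℳ j ⊓ (Submodule.span Rᵐᵒᵖ (Set.range a)).restrictScalars k) := by
  ext y
  constructor
  · rintro ⟨⟨w, hw⟩, rfl⟩
    rw [Submodule.mem_inf]
    constructor
    · exact totk_mem_deg hgrM ha (mem_Fgr.mp hw)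
    · rw [Submodule.restrictScalars_mem, LinearMap.domRestrict_apply, totk_apply]
      apply Submodule.sum_mem
      intro i _
      exact Submodule.smul_mem _ _ (Submodule.subset_span ⟨i, rfl⟩)
  · intro hy
    rw [Submodule.mem_inf, Submodule.restrictScalars_mem] at hy
    obtain ⟨w, hw1, hw2⟩ := homog_rep hconn hgrM ha hy.1 hy.2
    exact ⟨⟨w, mem_Fgr.mpr hw1⟩, hw2⟩

lemma hilb_rank_null (hconn : IsConnAlg k R 𝒜) (hlf : LocFin k R 𝒜)
    (hgrM : IsGradedMod k R M 𝒜 ℳ) {a : ι → M} {dg : ι → ℤ}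
    (ha : ∀ i, a i ∈ ℳ (dg i)) (j : ℤ) :
    Module.finrank k (ℳ j ⊓ (Submodule.span Rᵐᵒᵖ (Set.range a)).restrictScalars k :
        Submodule k M)
      + Module.finrank k (Fgr 𝒜 dg j ⊓ (LinearMap.ker (tot R a)).restrictScalars k :
        Submodule k (ι → R))
      = Module.finrank k (Fgr 𝒜 dg j) := by
  haveI := fd_Fgr hlf dg j
  have h1 := LinearMap.finrank_range_add_finrank_ker ((totk k R a).domRestrict (Fgr 𝒜 dg j))
  rw [range_totk_deg hconn hgrM ha j] at h1
  have h2 : LinearMap.ker ((totk k R a).domRestrict (Fgr 𝒜 dg j)) =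
      Submodule.comap (Fgr 𝒜 dg j).subtype
        (Fgr 𝒜 dg j ⊓ (LinearMap.ker (tot R a)).restrictScalars k) := by
    ext ⟨x, hx⟩
    rw [LinearMap.mem_ker, LinearMap.domRestrict_apply, Submodule.mem_comap,
      Submodule.mem_inf]
    constructor
    · intro h
      refine ⟨hx, ?_⟩
      rw [Submodule.restrictScalars_mem, LinearMap.mem_ker]
      exact h
    · rintro ⟨-, h⟩
      rw [Submodule.restrictScalars_mem, LinearMap.mem_ker] at h
      exact h
  rw [h2] at h1
  rw [← h1]
  congr 1
  exact (LinearEquiv.finrank_eq (Submodule.comapSubtypeEquivOfLe inf_le_left)).symm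

lemma fd_piece (hconn : IsConnAlg k R 𝒜) (hlf : LocFin k R 𝒜)
    (hgrM : IsGradedMod k R M 𝒜 ℳ) {t : ℕ} {b : Fin t → M} {db : Fin t → ℤ}
    (hb : ∀ l, b l ∈ ℳ (db l)) (hbspan : Submodule.span Rᵐᵒᵖ (Set.range b) = ⊤)
    (δ : ℤ) : FiniteDimensional k (ℳ δ) := by
  haveI := fd_Fgr hlf db δ
  have h1 := range_totk_deg hconn hgrM hb δ
  rw [hbspan] at h1
  have h2 : ((⊤ : Submodule Rᵐᵒᵖ M).restrictScalars k) = ⊤ := rfl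
  rw [h2, inf_top_eq] at h1
  rw [← h1]
  infer_instance

lemma piece_bot (hconn : IsConnAlg k R 𝒜) (hgrM : IsGradedMod k R M 𝒜 ℳ)
    {t : ℕ} {b : Fin t → M} {db : Fin t → ℤ}
    (hb : ∀ l, b l ∈ ℳ (db l)) (hbspan : Submodule.span Rᵐᵒᵖ (Set.range b) = ⊤)
    {j : ℤ} (hj : ∀ l, j < db l) : ℳ j = ⊥ := by
  rw [eq_bot_iff]
  intro y hy
  have hyN : y ∈ Submodule.span Rᵐᵒᵖ (Set.range b) := by rw [hbspan]; trivial
  obtain ⟨w, hw1, hw2⟩ := homog_rep hconn hgrM hb hy hyN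
  have hw0 : ∀ l, w l = 0 := by
    intro l
    have h1 := hw1 l
    rw [grZ_neg (by have := hj l; omega)] at h1
    simpa using h1
  rw [Submodule.mem_bot, ← hw2]
  rw [Finset.sum_congr rfl fun l _ => by rw [hw0 l]]
  simp

end RankNull

section Core
variable {k : Type} [Field k] {R : Type} [Ring R] [Algebra k R]
variable {M : Type} [AddCommGroup M] [Module Rᵐᵒᵖ M] [Module k M]
  [IsScalarTower k Rᵐᵒᵖ M]
variable {𝒜 : ℕ → Submodule k R} {ℳ : ℤ → Submodule k M}

lemma genLE_mono {N : Submodule Rᵐᵒᵖ M} {d1 d2 : ℤ} (h : d1 ≤ d2)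
    (hg : GenLE k R M ℳ N d1) : GenLE k R M ℳ N d2 := by
  refine le_trans hg (Submodule.span_mono ?_)
  rintro x ⟨hx, j, hj, hxj⟩
  exact ⟨hx, j, le_trans hj h, hxj⟩

lemma genLE_span {ι : Type} [Fintype ι] {a : ι → M} {dg : ι → ℤ} {dd : ℤ}
    (ha : ∀ i, a i ∈ ℳ (dg i)) (hdd : ∀ i, dg i ≤ dd) :
    GenLE k R M ℳ (Submodule.span Rᵐᵒᵖ (Set.range a)) dd := by
  rw [GenLE, Submodule.span_le]
  rintro x ⟨i, rfl⟩
  exact Submodule.subset_span ⟨Submodule.subset_span ⟨i, rfl⟩, dg i, hdd i, ha i⟩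

lemma solGenLE_mono {n : ℕ} {a : Fin n → M} {dg : Fin n → ℤ} {D1 D2 : ℤ} (h : D1 ≤ D2)
    (hs : SolGenLE k R M 𝒜 a dg D1) : SolGenLE k R M 𝒜 a dg D2 := by
  intro v hv
  refine Submodule.span_mono ?_ (hs v hv)
  rintro w ⟨hw, j, hj, hwj⟩
  exact ⟨hw, j, le_trans hj h, hwj⟩

lemma core_lemma (hconn : IsConnAlg k R 𝒜) (hlf : LocFin k R 𝒜)
    (hcoh : GradedCoherent k R 𝒜) (hgrM : IsGradedMod k R M 𝒜 ℳ)
    {t : ℕ} {b : Fin t → M} {db : Fin t → ℤ} (hb : ∀ l, b l ∈ ℳ (db l))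
    (hbspan : Submodule.span Rᵐᵒᵖ (Set.range b) = ⊤)
    {mr : ℕ} {hrel : Fin mr → Fin t → R} {erel : Fin mr → ℤ}
    (hrelhom : ∀ p l, hrel p l ∈ grZ k R 𝒜 (erel p - db l))
    (hrelsol : SolSpanBy R M b hrel)
    (hSer : EffForSeries k R M ℳ)
    (hgenF : ∀ (n : ℕ) (dg : Fin n → ℤ), EffForGen k R (Fin n → R) (Fgr 𝒜 dg))
    (NB : ℕ) (j0 : ℤ) (d : ℕ) :
    ∃ D : ℤ, (d : ℤ) ≤ D ∧ ∀ (n : ℕ) (dg : Fin n → ℤ) (a : Fin n → M),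
      n ≤ NB → (∀ i, a i ∈ ℳ (dg i)) → (∀ i, dg i ∈ Finset.Icc j0 (d : ℤ)) →
      SolGenLE k R M 𝒜 a dg D := by
  classical
  set T : Set (ℤ → ℕ) := {h | ∃ L : Submodule Rᵐᵒᵖ M,
    GenLE k R M ℳ L (d : ℤ) ∧ h = hilb k R M ℳ L} with hT
  have hTfin : T.Finite := hSer (d : ℤ)
  set Sh := Σ m : Fin (NB+1), (Fin (m : ℕ) → (Finset.Icc j0 (d : ℤ))) with hSh
  set dgS : ∀ σ : Sh, Fin (σ.1 : ℕ) → ℤ := fun σ q => (σ.2 q : ℤ) with hdgS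
  set gb : ∀ (σ : Sh), (ℤ → ℕ) → ℤ :=
    fun σ h => Classical.choose (hgenF (σ.1 : ℕ) (dgS σ) h) with hgb
  have gbs : ∀ (σ : Sh) (h : ℤ → ℕ) (L : Submodule Rᵐᵒᵖ (Fin (σ.1 : ℕ) → R)),
      L.FG → hilb k R (Fin (σ.1 : ℕ) → R) (Fgr 𝒜 (dgS σ)) L = h →
      GenLE k R (Fin (σ.1 : ℕ) → R) (Fgr 𝒜 (dgS σ)) L (gb σ h) :=
    fun σ h => Classical.choose_spec (hgenF (σ.1 : ℕ) (dgS σ) h)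
  set Bset : Set ℤ := ⋃ (σ : Sh), (gb σ) ''
    ((fun (tt : ℤ → ℕ) => (fun j => Module.finrank k (Fgr 𝒜 (dgS σ) j) - tt j)) '' T)
    with hBset
  have hBfin : Bset.Finite := Set.finite_iUnion (fun σ => (hTfin.image _).image _)
  obtain ⟨ub, hub⟩ := hBfin.bddAbove
  refine ⟨max (d : ℤ) ub, le_max_left _ _, ?_⟩
  intro n dg a hn ha hdg
  have hn' : n < NB + 1 := by omega
  set σ : Sh := ⟨⟨n, hn'⟩, fun q => ⟨dg q, hdg q⟩⟩ with hσ
  have hdg' : dgS σ = dg := rfl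
  set Ω : Submodule Rᵐᵒᵖ (Fin n → R) := LinearMap.ker (tot R a) with hΩ
  have hΩfg : Ω.FG :=
    sols_fg hconn hcoh hgrM hb hbspan hrelhom hrelsol a dg ha
  set N : Submodule Rᵐᵒᵖ M := Submodule.span Rᵐᵒᵖ (Set.range a) with hN
  have hilbeq : hilb k R (Fin n → R) (Fgr 𝒜 dg) Ω =
      fun j => Module.finrank k (Fgr 𝒜 dg j) - hilb k R M ℳ N j := by
    funext j
    have h1 := hilb_rank_null hconn hlf hgrM ha j
    show Module.finrank k
        (Fgr 𝒜 dg j ⊓ (LinearMap.ker (tot R a)).restrictScalars k : Submodule k (Fin n → R)) =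
      Module.finrank k (Fgr 𝒜 dg j) -
        Module.finrank k
          (ℳ j ⊓ (Submodule.span Rᵐᵒᵖ (Set.range a)).restrictScalars k : Submodule k M)
    omega
  have hNT : hilb k R M ℳ N ∈ T :=
    ⟨N, genLE_span ha (fun i => (Finset.mem_Icc.mp (hdg i)).2), rfl⟩
  have hmem : gb σ (hilb k R (Fin n → R) (Fgr 𝒜 dg) Ω) ∈ Bset := by
    rw [hBset]
    refine Set.mem_iUnion.mpr ⟨σ, ?_⟩
    refine Set.mem_image_of_mem _ ?_
    exact ⟨hilb k R M ℳ N, hNT, by rw [hilbeq]⟩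
  have hle : gb σ (hilb k R (Fin n → R) (Fgr 𝒜 dg) Ω) ≤ max (d : ℤ) ub :=
    le_trans (hub hmem) (le_max_right _ _)
  have hgle : GenLE k R (Fin n → R) (Fgr 𝒜 dg) Ω (max (d : ℤ) ub) :=
    genLE_mono hle (gbs σ _ Ω hΩfg rfl)
  intro v hv
  have hvΩ : v ∈ Ω := hv
  refine Submodule.span_mono ?_ (hgle hvΩ)
  rintro x ⟨hx1, j, hj, hx2⟩
  exact ⟨hx1, j, hj, fun i => mem_Fgr.mp hx2 i⟩

end Core

section Reduce
variable {k : Type} [Field k] {R : Type} [Ring R] [Algebra k R]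
variable {M : Type} [AddCommGroup M] [Module Rᵐᵒᵖ M] [Module k M]
  [IsScalarTower k Rᵐᵒᵖ M]
variable {𝒜 : ℕ → Submodule k R} {ℳ : ℤ → Submodule k M}

lemma pigeonhole [DecidablePred (fun i : M => i ≠ 0)] (hfd : ∀ δ : ℤ, FiniteDimensional k (ℳ δ))
    {n : ℕ} {a : Fin n → M} {dg : Fin n → ℤ} (ha : ∀ i, a i ∈ ℳ (dg i))
    {j0 dI : ℤ} (hlow : ∀ i, a i ≠ 0 → j0 ≤ dg i) (hhigh : ∀ i, dg i ≤ dI)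
    (hcard : ∑ δ ∈ Finset.Icc j0 dI, Module.finrank k (ℳ δ) <
      (Finset.univ.filter (fun i => a i ≠ 0)).card) :
    ∃ i0, a i0 ≠ 0 ∧
      a i0 ∈ Submodule.span k {y | ∃ i, i ≠ i0 ∧ dg i = dg i0 ∧ y = a i} := by
  classical
  set S := Finset.univ.filter (fun i => a i ≠ 0) with hS
  have hfib : S.card = ∑ δ ∈ Finset.Icc j0 dI, (S.filter (fun i => dg i = δ)).card := by
    apply Finset.card_eq_sum_card_fiberwise
    intro i hi
    simp only [hS, Finset.mem_coe, Finset.mem_filter] at hi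
    exact Finset.mem_Icc.mpr ⟨hlow i hi.2, hhigh i⟩
  have hδ : ∃ δ ∈ Finset.Icc j0 dI,
      Module.finrank k (ℳ δ) < (S.filter (fun i => dg i = δ)).card := by
    by_contra hcon
    push_neg at hcon
    have h1 : S.card ≤ ∑ δ ∈ Finset.Icc j0 dI, Module.finrank k (ℳ δ) := by
      rw [hfib]
      exact Finset.sum_le_sum hcon
    omega
  obtain ⟨δ, hδIcc, hδlt⟩ := hδ
  set Sδ := S.filter (fun i => dg i = δ) with hSδ
  haveI := hfd δ
  set F : {i // i ∈ Sδ} → ℳ δ := fun i =>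
    ⟨a i.1, by
      have h2 : dg i.1 = δ := (Finset.mem_filter.mp i.2).2
      rw [← h2]; exact ha i.1⟩ with hF
  have hnli : ¬ LinearIndependent k F := by
    intro hli
    have h3 := hli.fintype_card_le_finrank
    rw [Fintype.card_coe] at h3
    omega
  rw [linearIndependent_iff_notMem_span] at hnli
  push_neg at hnli
  obtain ⟨i, hi⟩ := hnli
  have hane : a i.1 ≠ 0 :=
    (Finset.mem_filter.mp ((Finset.mem_filter.mp i.2).1)).2
  refine ⟨i.1, hane, ?_⟩
  have h4 : (ℳ δ).subtype (F i) ∈ Submodule.map (ℳ δ).subtype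
      (Submodule.span k (F '' (Set.univ \ {i}))) := Submodule.mem_map_of_mem hi
  rw [Submodule.map_span] at h4
  have h5 : a i.1 = (ℳ δ).subtype (F i) := rfl
  rw [← h5] at h4
  refine Submodule.span_mono ?_ h4
  rintro y ⟨z, ⟨w, hw, rfl⟩, rfl⟩
  refine ⟨w.1, ?_, ?_, rfl⟩
  · intro hww
    exact (Set.mem_diff _).mp hw |>.2 (Set.mem_singleton_iff.mpr (Subtype.ext hww))
  · have hwδ : dg w.1 = δ := (Finset.mem_filter.mp w.2).2
    have hiδ : dg i.1 = δ := (Finset.mem_filter.mp i.2).2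
    rw [hwδ, hiδ]

lemma reduce_step (hconn : IsConnAlg k R 𝒜) {n : ℕ} {a : Fin n → M} {dg : Fin n → ℤ}
    {i0 : Fin n} {D : ℤ} (hd0 : dg i0 ≤ D)
    (hdep : a i0 ∈ Submodule.span k {y | ∃ i, i ≠ i0 ∧ dg i = dg i0 ∧ y = a i})
    (hred : SolGenLE k R M 𝒜 (Function.update a i0 0) dg D) :
    SolGenLE k R M 𝒜 a dg D := by
  classical
  set P : Fin n → Prop := fun i => i ≠ i0 ∧ dg i = dg i0 with hP
  have hset : {y | ∃ i, i ≠ i0 ∧ dg i = dg i0 ∧ y = a i} =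
      Set.range (fun i : {i // P i} => a i.1) := by
    ext y
    constructor
    · rintro ⟨i, h1, h2, rfl⟩; exact ⟨⟨i, h1, h2⟩, rfl⟩
    · rintro ⟨⟨i, h1, h2⟩, rfl⟩; exact ⟨i, h1, h2, rfl⟩
  rw [hset] at hdep
  obtain ⟨cP, hcP⟩ := (Submodule.mem_span_range_iff_exists_fun k).mp hdep
  set cc : Fin n → k := fun i => if h : P i then cP ⟨i, h⟩ else 0 with hcc
  have hcc0 : cc i0 = 0 := by
    simp only [hcc]
    rw [dif_neg]
    intro h
    exact h.1 rfl
  have hccP : ∀ i, cc i ≠ 0 → P i := by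
    intro i h
    by_contra hPi
    apply h
    simp only [hcc]
    rw [dif_neg hPi]
  have hsum : (∑ i, cc i • a i) = a i0 := by
    rw [← hcP]
    rw [← Finset.sum_subset (Finset.filter_subset P Finset.univ) ?hzero]
    case hzero =>
      intro i _ hni
      have : ¬ P i := by
        intro hPi
        exact hni (Finset.mem_filter.mpr ⟨Finset.mem_univ i, hPi⟩)
      have hc0 : cc i = 0 := by simp only [hcc]; rw [dif_neg this]
      rw [hc0, zero_smul]
    rw [Finset.sum_subtype (s := Finset.univ.filter P) (p := P)
      (fun i => by simp) (fun i => cc i • a i)]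
    refine Finset.sum_congr rfl fun x _ => ?_
    have : cc x.1 = cP x := by simp only [hcc]; rw [dif_pos x.2]
    rw [this]
  set u : Fin n → R := fun i => (if i = i0 then 1 else 0) - algebraMap k R (cc i) with hu
  have hui0 : u i0 = 1 := by
    simp [hu, hcc0]
  have husol : tot R a u = 0 := by
    rw [tot_apply]
    have h1 : ∀ i, op (u i) • a i =
        (op (if i = i0 then (1:R) else 0) • a i) - cc i • a i := by
      intro i
      simp only [hu]
      have h2 : op ((if i = i0 then (1:R) else 0) - algebraMap k R (cc i)) =
          op (if i = i0 then (1:R) else 0) - op (algebraMap k R (cc i)) := rfl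
      rw [h2, sub_smul, op_algebraMap_smul]
    rw [Finset.sum_congr rfl fun i _ => h1 i, Finset.sum_sub_distrib, hsum]
    have h3 : (∑ i, op (if i = i0 then (1:R) else 0) • a i) = a i0 := by
      rw [Finset.sum_eq_single i0]
      · rw [if_pos rfl, MulOpposite.op_one, one_smul]
      · intro i _ hne
        rw [if_neg hne, MulOpposite.op_zero, zero_smul]
      · intro h; exact absurd (Finset.mem_univ _) h
    rw [h3, sub_self]
  have huhom : ∀ i, u i ∈ grZ k R 𝒜 (dg i0 - dg i) := by
    intro i
    by_cases h : i = i0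
    · subst h
      rw [sub_self, hui0]
      exact one_mem_grZ0 hconn
    · simp only [hu]
      rw [if_neg h, zero_sub]
      apply neg_mem
      by_cases hc : cc i = 0
      · rw [hc, map_zero]; exact zero_mem _
      · have hPi := hccP i hc
        rw [hPi.2, sub_self]
        exact algebraMap_mem_grZ0 hconn _
  intro v hv
  have hvtot : tot R a v = 0 := hv
  set w : Fin n → R := v - op (v i0) • u with hw
  have hwi0 : w i0 = 0 := by
    simp only [hw]
    rw [Pi.sub_apply, Pi.smul_apply, op_smul_eq_mul', hui0, one_mul, sub_self]
  have hwsol : tot R a w = 0 := by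
    simp only [hw]
    rw [map_sub, map_smul, hvtot, husol]
    simp
  have hwsol' : tot R (Function.update a i0 0) w = 0 := by
    rw [tot_apply]
    have h1 : ∀ i, op (w i) • Function.update a i0 0 i = op (w i) • a i := by
      intro i
      by_cases h : i = i0
      · subst h
        rw [hwi0]
        simp
      · rw [Function.update_of_ne h]
    rw [Finset.sum_congr rfl fun i _ => h1 i]
    exact hwsol
  have hwspan := hred w hwsol'
  -- the linear retraction killing coordinate i0
  set Tm : (Fin n → R) →ₗ[Rᵐᵒᵖ] (Fin n → R) :=
    { toFun := fun z => z - op (z i0) • (Pi.single i0 1 : Fin n → R)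
      map_add' := by
        intro z1 z2
        show (z1 + z2) - op ((z1 + z2) i0) • (Pi.single i0 1 : Fin n → R) =
          (z1 - op (z1 i0) • (Pi.single i0 1 : Fin n → R)) + (z2 - op (z2 i0) • (Pi.single i0 1 : Fin n → R))
        have h2 : op ((z1 + z2) i0) • (Pi.single i0 (1:R) : Fin n → R) =
            op (z1 i0) • (Pi.single i0 1 : Fin n → R) + op (z2 i0) • (Pi.single i0 1 : Fin n → R) := by
          have h3 : op ((z1 + z2) i0) = op (z1 i0) + op (z2 i0) := rfl
          rw [h3, add_smul]
        rw [h2]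
        abel
      map_smul' := by
        intro r z
        show (r • z) - op ((r • z) i0) • (Pi.single i0 1 : Fin n → R) =
          r • (z - op (z i0) • (Pi.single i0 1 : Fin n → R))
        have h2 : op ((r • z) i0) = r * op (z i0) := by
          simp [MulOpposite.smul_eq_mul_unop]
        rw [h2, mul_smul, smul_sub] } with hTm
  have hTw : Tm w = w := by
    simp only [hTm, LinearMap.coe_mk, AddHom.coe_mk]
    rw [hwi0, MulOpposite.op_zero, zero_smul, sub_zero]
  have hTmem : ∀ z, IsSol R M (Function.update a i0 0) z →
      (∃ j ≤ D, FreeHomog k R 𝒜 dg z j) →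
      IsSol R M a (Tm z) ∧ ∃ j ≤ D, FreeHomog k R 𝒜 dg (Tm z) j := by
    intro z hzsol hzhom
    have hz' : tot R (Function.update a i0 0) z = 0 := hzsol
    constructor
    · show tot R a (Tm z) = 0
      have h1 : Tm z = z - op (z i0) • (Pi.single i0 1 : Fin n → R) := rfl
      rw [h1, map_sub, map_smul, tot_single]
      have h2 : tot R a z = tot R (Function.update a i0 0) z + op (z i0) • a i0 := by
        rw [tot_apply, tot_apply]
        have h3 : ∀ i, op (z i) • a i = op (z i) • Function.update a i0 0 i +
            (if i = i0 then op (z i0) • a i0 else 0) := by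
          intro i
          by_cases h : i = i0
          · subst h
            rw [if_pos rfl, Function.update_self, smul_zero, zero_add]
          · rw [if_neg h, Function.update_of_ne h, add_zero]
        rw [Finset.sum_congr rfl fun i _ => h3 i, Finset.sum_add_distrib,
          Finset.sum_ite_eq' Finset.univ i0 (fun _ => op (z i0) • a i0),
          if_pos (Finset.mem_univ i0)]
      rw [h2, hz', zero_add, sub_self]
    · obtain ⟨j, hj, hzj⟩ := hzhom
      refine ⟨j, hj, ?_⟩
      intro i
      have h1 : Tm z i = z i - (Pi.single i0 1 : Fin n → R) i * z i0 := rfl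
      rw [h1]
      by_cases h : i = i0
      · subst h
        rw [Pi.single_apply, if_pos rfl, one_mul, sub_self]
        exact zero_mem _
      · rw [Pi.single_apply, if_neg h, zero_mul, sub_zero]
        exact hzj i
  have hveq : v = w + op (v i0) • u := by
    simp only [hw]
    abel
  rw [hveq]
  apply Submodule.add_mem
  · have h1 : w ∈ Submodule.map Tm (Submodule.span Rᵐᵒᵖ
        {z | IsSol R M (Function.update a i0 0) z ∧ ∃ j ≤ D, FreeHomog k R 𝒜 dg z j}) :=
      ⟨w, hwspan, hTw⟩
    rw [Submodule.map_span] at h1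
    refine Submodule.span_mono ?_ h1
    rintro y ⟨z, ⟨hz1, hz2⟩, rfl⟩
    exact hTmem z hz1 hz2
  · apply Submodule.smul_mem
    exact Submodule.subset_span ⟨husol, dg i0, hd0, fun i => huhom i⟩

lemma extend_step (hconn : IsConnAlg k R 𝒜) {n n' : ℕ} (P : Fin n → Prop)
    [DecidablePred P] (eqv : {i // P i} ≃ Fin n') {a : Fin n → M} {dg : Fin n → ℤ}
    {D : ℤ} (hz : ∀ i, ¬ P i → a i = 0) (hdg : ∀ i, dg i ≤ D)
    (hcore : SolGenLE k R M 𝒜 (fun q => a (eqv.symm q).1) (fun q => dg (eqv.symm q).1) D) :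
    SolGenLE k R M 𝒜 a dg D := by
  classical
  set Em : (Fin n' → R) →ₗ[Rᵐᵒᵖ] (Fin n → R) :=
    { toFun := fun z => fun i => if h : P i then z (eqv ⟨i, h⟩) else 0
      map_add' := by
        intro z1 z2
        funext i
        by_cases h : P i
        · simp [dif_pos h]
        · simp [dif_neg h]
      map_smul' := by
        intro r z
        funext i
        by_cases h : P i
        · simp only [dif_pos h, RingHom.id_apply, Pi.smul_apply, dif_pos h]
        · simp only [dif_neg h, RingHom.id_apply, Pi.smul_apply, dif_neg h]
          rw [MulOpposite.smul_eq_mul_unop, zero_mul] } with hEm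
  have hEapp : ∀ (z : Fin n' → R) (i : Fin n) (h : P i), Em z i = z (eqv ⟨i, h⟩) := by
    intro z i h
    show (if h : P i then z (eqv ⟨i, h⟩) else 0) = z (eqv ⟨i, h⟩)
    rw [dif_pos h]
  have hEapp0 : ∀ (z : Fin n' → R) (i : Fin n), ¬ P i → Em z i = 0 := by
    intro z i h
    show (if h : P i then z (eqv ⟨i, h⟩) else 0) = 0
    rw [dif_neg h]
  -- sums over the subtype
  have hsum_eq : ∀ (f : Fin n → M), (∀ i, ¬ P i → f i = 0) →
      (∑ q, f (eqv.symm q).1) = ∑ i, f i := by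
    intro f hf
    rw [Equiv.sum_comp eqv.symm (fun (x : {i // P i}) => f x.1)]
    rw [← Finset.sum_subtype (s := Finset.univ.filter P) (p := P) (fun i => by simp) f]
    exact Finset.sum_subset (Finset.filter_subset P Finset.univ)
      (fun i _ hni => hf i (fun hPi =>
        hni (Finset.mem_filter.mpr ⟨Finset.mem_univ i, hPi⟩)))
  intro v hv
  have hvtot : tot R a v = 0 := hv
  set v'' : Fin n' → R := fun q => v (eqv.symm q).1 with hv''def
  have hv''sol : tot R (fun q => a (eqv.symm q).1) v'' = 0 := by
    rw [tot_apply]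
    have h1 : (∑ q, op (v'' q) • a (eqv.symm q).1) =
        ∑ q, (fun i => op (v i) • a i) (eqv.symm q).1 := rfl
    rw [h1, hsum_eq (fun i => op (v i) • a i) (fun i hi => by
      show op (v i) • a i = 0
      rw [hz i hi, smul_zero])]
    exact hvtot
  have hcorev := hcore v'' hv''sol
  set v0 : Fin n → R := Em v'' with hv0def
  have hv0app : ∀ i, P i → v0 i = v i := by
    intro i h
    rw [hv0def, hEapp v'' i h]
    simp only [hv''def, Equiv.symm_apply_apply]
  have hv0app0 : ∀ i, ¬ P i → v0 i = 0 := fun i h => hEapp0 v'' i h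
  have hveq : v = v0 + (v - v0) := by abel
  rw [hveq]
  apply Submodule.add_mem
  · -- v0 is in the span via Em
    have h1 : v0 ∈ Submodule.map Em (Submodule.span Rᵐᵒᵖ
        {w | IsSol R M (fun q => a (eqv.symm q).1) w ∧
          ∃ j ≤ D, FreeHomog k R 𝒜 (fun q => dg (eqv.symm q).1) w j}) :=
      ⟨v'', hcorev, rfl⟩
    rw [Submodule.map_span] at h1
    refine Submodule.span_mono ?_ h1
    rintro y ⟨z, ⟨hz1, hz2⟩, rfl⟩
    constructor
    · show tot R a (Em z) = 0
      rw [tot_apply]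
      have h2 : (∑ i, op (Em z i) • a i) =
          ∑ q, (fun i => op (Em z i) • a i) (eqv.symm q).1 := by
        rw [hsum_eq (fun i => op (Em z i) • a i) (fun i hi => by
          show op (Em z i) • a i = 0
          rw [hz i hi, smul_zero])]
      rw [h2]
      have h3 : ∀ q, op (Em z (eqv.symm q).1) • a (eqv.symm q).1 =
          op (z q) • a (eqv.symm q).1 := by
        intro q
        rw [hEapp z (eqv.symm q).1 (eqv.symm q).2]
        congr 2
        rw [show (⟨(eqv.symm q).1, (eqv.symm q).2⟩ : {i // P i}) = eqv.symm q from rfl]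
        rw [Equiv.apply_symm_apply]
      rw [Finset.sum_congr rfl fun q _ => h3 q]
      exact hz1
    · obtain ⟨j, hj, hzj⟩ := hz2
      refine ⟨j, hj, ?_⟩
      intro i
      by_cases h : P i
      · rw [hEapp z i h]
        have h4 := hzj (eqv ⟨i, h⟩)
        simp only [Equiv.symm_apply_apply] at h4
        exact h4
      · rw [hEapp0 z i h]
        exact zero_mem _
  · -- v - v0 is supported off P, combination of singles
    rw [show v - v0 = ∑ i, op ((v - v0) i) • Pi.single i 1 from (sum_op_single _).symm]
    apply Submodule.sum_mem
    intro i _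
    by_cases h : P i
    · have h1 : (v - v0) i = 0 := by
        rw [Pi.sub_apply, hv0app i h, sub_self]
      rw [h1, MulOpposite.op_zero, zero_smul]
      exact zero_mem _
    · apply Submodule.smul_mem
      apply Submodule.subset_span
      constructor
      · show tot R a (Pi.single i 1) = 0
        rw [tot_single, hz i h]
      · refine ⟨dg i, hdg i, ?_⟩
        intro l
        show (Pi.single i 1 : Fin n → R) l ∈ _
        by_cases hil : i = l
        · subst hil
          rw [Pi.single_apply, if_pos rfl, sub_self]
          exact one_mem_grZ0 hconn
        · rw [Pi.single_apply, if_neg (fun hh => hil hh.symm)]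
          exact zero_mem _

end Reduce

section Assemble
variable {k : Type} [Field k] {R : Type} [Ring R] [Algebra k R]
variable {M : Type} [AddCommGroup M] [Module Rᵐᵒᵖ M] [Module k M]
  [IsScalarTower k Rᵐᵒᵖ M]
variable {𝒜 : ℕ → Submodule k R} {ℳ : ℤ → Submodule k M}

lemma effCoh_main (hconn : IsConnAlg k R 𝒜) (hlf : LocFin k R 𝒜)
    (hcoh : GradedCoherent k R 𝒜) (hgrM : IsGradedMod k R M 𝒜 ℳ)
    (hfp : ModFinPres k R M 𝒜 ℳ) (hSer : EffForSeries k R M ℳ)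
    (hgenF : ∀ (n : ℕ) (dg : Fin n → ℤ), EffForGen k R (Fin n → R) (Fgr 𝒜 dg)) :
    EffCoh k R M 𝒜 ℳ := by
  classical
  obtain ⟨t, b, db, hb, hbspan, mr, hrel, erel, hrelhom, hrelsol⟩ := hfp
  have hfd : ∀ δ : ℤ, FiniteDimensional k (ℳ δ) :=
    fun δ => fd_piece hconn hlf hgrM hb hbspan δ
  set j0 : ℤ := (insert 0 (Finset.image db Finset.univ)).min'
    (Finset.insert_nonempty _ _) with hj0def
  have hj0 : ∀ (jj : ℤ) (x : M), x ∈ ℳ jj → x ≠ 0 → j0 ≤ jj := by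
    intro jj x hx hxne
    by_contra hlt
    push_neg at hlt
    have hbot : ∀ l, jj < db l := by
      intro l
      have h1 : j0 ≤ db l := Finset.min'_le _ _
        (Finset.mem_insert_of_mem (Finset.mem_image_of_mem db (Finset.mem_univ l)))
      omega
    have h2 := piece_bot hconn hgrM hb hbspan hbot
    rw [h2, Submodule.mem_bot] at hx
    exact hxne hx
  set NBf : ℕ → ℕ := fun d => ∑ δ ∈ Finset.Icc j0 (d : ℤ), Module.finrank k (ℳ δ)
    with hNBf
  choose Df hDf1 hDf2 using fun d : ℕ =>
    core_lemma hconn hlf hcoh hgrM hb hbspan (fun p l => hrelhom p l) hrelsol hSer hgenF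
      (NBf d) j0 d
  refine ⟨fun d => (Df d).toNat, ?_, ?_⟩
  · intro d
    have := hDf1 d
    show d ≤ (Df d).toNat
    omega
  · intro d n a dg ha hdle
    apply solGenLE_mono (show Df d ≤ (((Df d).toNat : ℕ) : ℤ) by omega)
    have hbase : ∀ (a : Fin n → M), (∀ i, a i ∈ ℳ (dg i)) →
        (Finset.univ.filter (fun i => a i ≠ 0)).card ≤ NBf d →
        SolGenLE k R M 𝒜 a dg (Df d) := by
      intro a ha hcard
      set P : Fin n → Prop := fun i => a i ≠ 0 with hPdef
      have eqv : {i // P i} ≃ Fin (Fintype.card {i // P i}) := Fintype.equivFin _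
      have hn' : Fintype.card {i // P i} ≤ NBf d := by
        rw [Fintype.card_subtype]
        exact hcard
      apply extend_step hconn P eqv (fun i hi => not_not.mp hi)
        (fun i => le_trans (hdle i) (hDf1 d))
      apply hDf2 d (Fintype.card {i // P i}) (fun q => dg (eqv.symm q).1)
        (fun q => a (eqv.symm q).1) hn' (fun q => ha _)
      intro q
      exact Finset.mem_Icc.mpr ⟨hj0 _ _ (ha _) (eqv.symm q).2, hdle _⟩
    have main : ∀ (m : ℕ) (a : Fin n → M), (∀ i, a i ∈ ℳ (dg i)) →
        (Finset.univ.filter (fun i => a i ≠ 0)).card ≤ m →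
        SolGenLE k R M 𝒜 a dg (Df d) := by
      intro m
      induction m with
      | zero =>
        intro a ha hc
        exact hbase a ha (le_trans hc (Nat.zero_le _))
      | succ m ih =>
        intro a ha hc
        by_cases hle : (Finset.univ.filter (fun i => a i ≠ 0)).card ≤ NBf d
        · exact hbase a ha hle
        · push_neg at hle
          have hle' : (∑ δ ∈ Finset.Icc j0 (d : ℤ), Module.finrank k (ℳ δ)) <
              (Finset.univ.filter (fun i => a i ≠ 0)).card := hle
          obtain ⟨i0, hi0ne, hi0dep⟩ :=
            pigeonhole hfd ha (fun i hi => hj0 _ _ (ha i) hi) hdle hle'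
          apply reduce_step hconn (le_trans (hdle i0) (hDf1 d)) hi0dep
          apply ih (Function.update a i0 0)
          · intro i
            by_cases h : i = i0
            · subst h
              rw [Function.update_self]
              exact zero_mem _
            · rw [Function.update_of_ne h]
              exact ha i
          · have hseteq : Finset.univ.filter (fun i => Function.update a i0 0 i ≠ 0) =
                (Finset.univ.filter (fun i => a i ≠ 0)).erase i0 := by
              ext i
              rw [Finset.mem_erase, Finset.mem_filter, Finset.mem_filter]
              constructor
              · rintro ⟨h1, h2⟩
                by_cases h : i = i0
                · exfalso
                  apply h2
                  subst h
                  rw [Function.update_self]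
                · rw [Function.update_of_ne h] at h2
                  exact ⟨h, Finset.mem_univ i, h2⟩
              · rintro ⟨h1, -, h2⟩
                refine ⟨Finset.mem_univ i, ?_⟩
                rwa [Function.update_of_ne h1]
            rw [hseteq, Finset.card_erase_of_mem
              (Finset.mem_filter.mpr ⟨Finset.mem_univ i0, hi0ne⟩)]
            omega
    exact main _ a ha le_rfl

end Assemble



















/-- over a graded right coherent algebra, if every finitely presented
graded module is effective for series and for generators, then every finitely
presented graded module is effectively coherent; in particular so is the algebra. -/
theorem statement_10 (k R : Type) [Field k] [Ring R] [Algebra k R]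
    (𝒜 : ℕ → Submodule k R) (hconn : IsConnAlg k R 𝒜) (hlf : LocFin k R 𝒜)
    (hcoh : GradedCoherent k R 𝒜)
    (heff : ∀ P : ModData k R, IsGradedMod k R P.carrier 𝒜 P.grading →
      ModFinPres k R P.carrier 𝒜 P.grading →
      EffForSeries k R P.carrier P.grading ∧ EffForGen k R P.carrier P.grading) :
    (∀ P : ModData k R, IsGradedMod k R P.carrier 𝒜 P.grading →
      ModFinPres k R P.carrier 𝒜 P.grading →
      EffCoh k R P.carrier 𝒜 P.grading) ∧
    EffCohAlg k R 𝒜 := by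
  have hgenF : ∀ (n : ℕ) (dg : Fin n → ℤ), EffForGen k R (Fin n → R) (Fgr 𝒜 dg) := by
    intro n dg
    exact (heff ⟨Fin n → R, Fgr 𝒜 dg⟩ (isGradedMod_F hconn dg) (modFinPres_F hconn dg)).2
  have part1 : ∀ P : ModData k R, IsGradedMod k R P.carrier 𝒜 P.grading →
      ModFinPres k R P.carrier 𝒜 P.grading → EffCoh k R P.carrier 𝒜 P.grading := by
    intro P hgr hfp
    obtain ⟨hSer, -⟩ := heff P hgr hfp
    exact effCoh_main hconn hlf hcoh hgr hfp hSer hgenF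
  refine ⟨part1, ?_⟩
  exact part1 ⟨R, grZ k R 𝒜⟩ (isGradedMod_R hconn) (modFinPres_R hconn)

end NCG
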